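/- arXiv:2406.05762 — 4 statements merged into one kernel-verified Lean document; each statement's English description precedes it below -/
import Mathlib

section
/- Null form estimate: for any smooth ℂ-valued (or ℂ⁴-valued) functions f, g on ℝ^{1+3}, the quadratic null form Q_0(f,g) = ∂_t f ∂_t g − ∇f·∇g satisfies the pointwise bound |Q_0(f,g)| ≤ C ⟨t+r⟩^{−1}(|L_0 f| + |Γf|)|Γg| for a universal constant C, where |Γf|² = Σ_k |Γ_k f|² with Γ ranging over translations, rotations and Lorentz boosts, and L_0 = t∂_t + x^a∂_a. -/
noncomputable section

open MeasureTheory Matrix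

/-- Space `ℝ³` with the Euclidean norm. -/
abbrev Sp : Type := EuclideanSpace ℝ (Fin 3)

section Ops

variable {F : Type} [NormedAddCommGroup F] [NormedSpace ℝ F]

/-- Time derivative `∂_t u`. -/
def ptE (u : ℝ → Sp → F) (t : ℝ) (x : Sp) : F := deriv (fun s => u s x) t

/-- Spatial derivative `∂_{x_i} u`. -/
def pxE (i : Fin 3) (u : ℝ → Sp → F) (t : ℝ) (x : Sp) : F :=
  fderiv ℝ (fun y => u t y) x (EuclideanSpace.single i 1)

/-- Spatial Laplacian `Δu`. -/
def lapE (u : ℝ → Sp → F) (t : ℝ) (x : Sp) : F := ∑ i : Fin 3, pxE i (pxE i u) t x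

/-- `(-□)u = ∂_t² u - Δ u`, where `□ = -∂_t² + Δ`. -/
def negBox (u : ℝ → Sp → F) (t : ℝ) (x : Sp) : F := ptE (ptE u) t x - lapE u t x

/-- Smoothness of a function of `(t,x)`. -/
def Smth (u : ℝ → Sp → F) : Prop := ContDiff ℝ (⊤ : ℕ∞) (fun p : ℝ × Sp => u p.1 p.2)

/-- Rotation vector field `Ω_{ab} = x_a ∂_b - x_b ∂_a`. -/
def rotE (a b : Fin 3) (u : ℝ → Sp → F) (t : ℝ) (x : Sp) : F :=
  x a • pxE b u t x - x b • pxE a u t x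

/-- Lorentz boost `L_a = t ∂_a + x_a ∂_t`. -/
def boostE (a : Fin 3) (u : ℝ → Sp → F) (t : ℝ) (x : Sp) : F :=
  t • pxE a u t x + x a • ptE u t x

/-- Scaling vector field `L_0 = t ∂_t + x^a ∂_a`. -/
def scalE (u : ℝ → Sp → F) (t : ℝ) (x : Sp) : F :=
  t • ptE u t x + ∑ a : Fin 3, x a • pxE a u t x

/-- The ten Klainerman vector fields `Γ = (∂, Ω, L)`. -/
def GF : Fin 10 → (ℝ → Sp → F) → ℝ → Sp → F :=
  ![ptE, pxE 0, pxE 1, pxE 2, rotE 0 1, rotE 0 2, rotE 1 2, boostE 0, boostE 1, boostE 2]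

/-- Ordered composition `Γ^{I|S}` of the fields of the word `σ` at the positions in `S`. -/
def GComp {n : ℕ} (σ : Fin n → Fin 10) (S : Finset (Fin n)) (f : ℝ → Sp → F) : ℝ → Sp → F :=
  (S.sort (· ≤ ·)).foldr (fun i g => GF (σ i) g) f

end Ops

/-- Japanese bracket `⟨p⟩ = (1+p²)^{1/2}`. -/
def jb (p : ℝ) : ℝ := Real.sqrt (1 + p ^ 2)

/-- Null form `Q₀(f,g) = ∂_t f ∂_t g - ∇f·∇g` (real-valued). -/
def Q0R (f g : ℝ → Sp → ℝ) (t : ℝ) (x : Sp) : ℝ :=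
  ptE f t x * ptE g t x - ∑ a : Fin 3, pxE a f t x * pxE a g t x

/-- Null form `Q₀(f,g)` (complex-valued). -/
def Q0C (f g : ℝ → Sp → ℂ) (t : ℝ) (x : Sp) : ℂ :=
  ptE f t x * ptE g t x - ∑ a : Fin 3, pxE a f t x * pxE a g t x

/-- `|∂u| = (Σ_{α=0}^3 |∂_α u|²)^{1/2}`. -/
def DNormR (u : ℝ → Sp → ℝ) (t : ℝ) (x : Sp) : ℝ :=
  Real.sqrt ((ptE u t x) ^ 2 + ∑ i : Fin 3, (pxE i u t x) ^ 2)

/-- `Σ_k |Γ_k u|`, the sum of absolute values of all ten Klainerman fields applied to `u`. -/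
def GammaAbsSum (u : ℝ → Sp → ℝ) (t : ℝ) (x : Sp) : ℝ :=
  |ptE u t x| + (∑ i : Fin 3, |pxE i u t x|) +
    (|rotE 0 1 u t x| + |rotE 0 2 u t x| + |rotE 1 2 u t x|) +
    ∑ a : Fin 3, |boostE a u t x|

/-- `|Γu| = (Σ_k |Γ_k u|²)^{1/2}` (real-valued). -/
def GammaNormR (u : ℝ → Sp → ℝ) (t : ℝ) (x : Sp) : ℝ :=
  Real.sqrt ((ptE u t x) ^ 2 + (∑ i : Fin 3, (pxE i u t x) ^ 2) +
    ((rotE 0 1 u t x) ^ 2 + (rotE 0 2 u t x) ^ 2 + (rotE 1 2 u t x) ^ 2) +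
    ∑ a : Fin 3, (boostE a u t x) ^ 2)

/-- `|Γu| = (Σ_k |Γ_k u|²)^{1/2}` (complex-valued). -/
def GammaNormC (u : ℝ → Sp → ℂ) (t : ℝ) (x : Sp) : ℝ :=
  Real.sqrt (‖ptE u t x‖ ^ 2 + (∑ i : Fin 3, ‖pxE i u t x‖ ^ 2) +
    (‖rotE 0 1 u t x‖ ^ 2 + ‖rotE 0 2 u t x‖ ^ 2 + ‖rotE 1 2 u t x‖ ^ 2) +
    ∑ a : Fin 3, ‖boostE a u t x‖ ^ 2)

/-- `Σ_{|J|≤1} |∂Γ^J u|`. -/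
def DGam1 (u : ℝ → Sp → ℝ) (t : ℝ) (x : Sp) : ℝ :=
  DNormR u t x + ∑ k : Fin 10, DNormR (GF k u) t x

/-- The four spacetime derivatives `∂_α`, `α = 0,…,3`. -/
def pd4 : Fin 4 → (ℝ → Sp → ℝ) → ℝ → Sp → ℝ := ![ptE, pxE 0, pxE 1, pxE 2]

abbrev C4 : Type := Fin 4 → ℂ

/-- Diagonal entries of the Minkowski metric `η = diag(-1,1,1,1)`. -/
def ηc : Fin 4 → ℂ := fun μ => if μ = 0 then -1 else 1

/-- Clifford relations `γ^μ γ^ν + γ^ν γ^μ = -2η_{μν} I₄`. -/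
def CliffordRel (γ : Fin 4 → Matrix (Fin 4) (Fin 4) ℂ) : Prop :=
  ∀ μ ν, γ μ * γ ν + γ ν * γ μ =
    ((-2 : ℂ) * (if μ = ν then ηc μ else 0)) • (1 : Matrix (Fin 4) (Fin 4) ℂ)

/-- Adjoint relations `(γ^μ)* = -η_{μμ} γ^μ`. -/
def AdjRel (γ : Fin 4 → Matrix (Fin 4) (Fin 4) ℂ) : Prop :=
  ∀ μ, (γ μ)ᴴ = (-ηc μ) • γ μ

/-- The massless Dirac operator `-iγ^μ ∂_μ`. -/
def diracOp (γ : Fin 4 → Matrix (Fin 4) (Fin 4) ℂ) (ψ : ℝ → Sp → C4) (t : ℝ) (x : Sp) : C4 :=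
  (-Complex.I) • ((γ 0).mulVec (ptE ψ t x) + ∑ a : Fin 3, (γ a.succ).mulVec (pxE a ψ t x))

/-- Modified rotation `Ω̂_{ab} = Ω_{ab} - (1/2)γ^a γ^b`. -/
def hatRotE (γ : Fin 4 → Matrix (Fin 4) (Fin 4) ℂ) (a b : Fin 3)
    (ψ : ℝ → Sp → C4) (t : ℝ) (x : Sp) : C4 :=
  rotE a b ψ t x - (1 / 2 : ℂ) • ((γ a.succ * γ b.succ).mulVec (ψ t x))

/-- Modified boost `L̂_a = L_a - (1/2)γ⁰ γ^a`. -/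
def hatBoostE (γ : Fin 4 → Matrix (Fin 4) (Fin 4) ℂ) (a : Fin 3)
    (ψ : ℝ → Sp → C4) (t : ℝ) (x : Sp) : C4 :=
  boostE a ψ t x - (1 / 2 : ℂ) • ((γ 0 * γ a.succ).mulVec (ψ t x))

/-- `|Γ̂ψ| = (Σ_k |Γ̂_k ψ|²)^{1/2}` over the ten modified fields. -/
def hatGammaNorm (γ : Fin 4 → Matrix (Fin 4) (Fin 4) ℂ)
    (ψ : ℝ → Sp → C4) (t : ℝ) (x : Sp) : ℝ :=
  Real.sqrt (‖ptE ψ t x‖ ^ 2 + (∑ i : Fin 3, ‖pxE i ψ t x‖ ^ 2) +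
    (‖hatRotE γ 0 1 ψ t x‖ ^ 2 + ‖hatRotE γ 0 2 ψ t x‖ ^ 2 + ‖hatRotE γ 1 2 ψ t x‖ ^ 2) +
    ∑ a : Fin 3, ‖hatBoostE γ a ψ t x‖ ^ 2)

/-- `|∂ψ| = (Σ_α |∂_α ψ|²)^{1/2}` for `ℂ⁴`-valued `ψ`. -/
def DNormC4 (ψ : ℝ → Sp → C4) (t : ℝ) (x : Sp) : ℝ :=
  Real.sqrt (‖ptE ψ t x‖ ^ 2 + ∑ i : Fin 3, ‖pxE i ψ t x‖ ^ 2)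

/-- `ω_a = x_a / |x|`. -/
def omg (x : Sp) (a : Fin 3) : ℝ := x a / ‖x‖

/-- The Dirac bilinear `φ₁* γ⁰ φ₂`. -/
def dform (γ : Fin 4 → Matrix (Fin 4) (Fin 4) ℂ) (φ₁ φ₂ : C4) : ℂ :=
  star φ₁ ⬝ᵥ (γ 0).mulVec φ₂

/-- `[φ]₋ = φ - ω_a γ⁰γ^a φ`. -/
def projMinus (γ : Fin 4 → Matrix (Fin 4) (Fin 4) ℂ) (x : Sp) (φ : C4) : C4 :=
  φ - ∑ a : Fin 3, ((omg x a : ℝ) : ℂ) • ((γ 0 * γ a.succ).mulVec φ)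

/-- `[φ]₊ = φ + ω_a γ⁰γ^a φ`. -/
def projPlus (γ : Fin 4 → Matrix (Fin 4) (Fin 4) ℂ) (x : Sp) (φ : C4) : C4 :=
  φ + ∑ a : Fin 3, ((omg x a : ℝ) : ℂ) • ((γ 0 * γ a.succ).mulVec φ)

/-- Ghost weight `q(r,t) = ∫_{-∞}^{r-t} ⟨s⟩^{-1-2δ} ds`. -/
def qw (δ t r : ℝ) : ℝ := ∫ s in Set.Iic (r - t), (jb s) ^ (-(1 + 2 * δ))



lemma jb_pos' (s : ℝ) : 0 < jb s := Real.sqrt_pos.2 (by positivity)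

lemma jb_le' (s : ℝ) : jb s ≤ 1 + |s| := by
  have h : jb s ≤ Real.sqrt ((1 + |s|)^2) :=
    Real.sqrt_le_sqrt (by nlinarith [abs_nonneg s, sq_abs s])
  rwa [Real.sqrt_sq (by positivity)] at h

lemma le_sqrt_of_sq_le' {a s : ℝ} (h : a^2 ≤ s) (ha : 0 ≤ a) : a ≤ Real.sqrt s := by
  have h2 := Real.sqrt_le_sqrt h
  rwa [Real.sqrt_sq ha] at h2

lemma abs_le_of_sq_le' {a b : ℝ} (h : a^2 ≤ b^2) (hb : 0 ≤ b) : |a| ≤ b := by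
  have h2 := Real.sqrt_le_sqrt h
  rwa [Real.sqrt_sq_eq_abs, Real.sqrt_sq hb] at h2

lemma cnorm_mul' (w : ℝ) (z : ℂ) : ‖(w:ℂ)*z‖ = |w| * ‖z‖ := by
  rw [norm_mul, Complex.norm_real, Real.norm_eq_abs]

lemma normsum3' (a b c : ℂ) : ‖a+b+c‖ ≤ ‖a‖+‖b‖+‖c‖ := by
  calc ‖a+b+c‖ ≤ ‖a+b‖+‖c‖ := norm_add_le _ _
    _ ≤ ‖a‖+‖b‖+‖c‖ := by linarith [norm_add_le a b]

set_option maxHeartbeats 1600000 in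
lemma key (t x0 x1 x2 r sf gf gg : ℝ) (p a0 a1 a2 q b0 b1 b2 : ℂ)
    (hr : 0 ≤ r) (hr2 : r^2 = x0^2 + x1^2 + x2^2)
    (hsf : sf = ‖((t:ℂ)*p + ((x0:ℂ)*a0 + (x1:ℂ)*a1 + (x2:ℂ)*a2))‖)
    (hgf0 : 0 ≤ gf) (hgg0 : 0 ≤ gg)
    (hp : ‖p‖ ≤ gf) (ha0 : ‖a0‖ ≤ gf) (ha1 : ‖a1‖ ≤ gf) (ha2 : ‖a2‖ ≤ gf)
    (hB0 : ‖((t:ℂ)*a0 + (x0:ℂ)*p)‖ ≤ gf) (hB1 : ‖((t:ℂ)*a1 + (x1:ℂ)*p)‖ ≤ gf) (hB2 : ‖((t:ℂ)*a2 + (x2:ℂ)*p)‖ ≤ gf)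
    (hR01 : ‖((x0:ℂ)*a1 - (x1:ℂ)*a0)‖ ≤ gf) (hR02 : ‖((x0:ℂ)*a2 - (x2:ℂ)*a0)‖ ≤ gf) (hR12 : ‖((x1:ℂ)*a2 - (x2:ℂ)*a1)‖ ≤ gf)
    (hq : ‖q‖ ≤ gg) (hb0 : ‖b0‖ ≤ gg) (hb1 : ‖b1‖ ≤ gg) (hb2 : ‖b2‖ ≤ gg)
    (hC0 : ‖((t:ℂ)*b0 + (x0:ℂ)*q)‖ ≤ gg) (hC1 : ‖((t:ℂ)*b1 + (x1:ℂ)*q)‖ ≤ gg) (hC2 : ‖((t:ℂ)*b2 + (x2:ℂ)*q)‖ ≤ gg)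
    (hS01 : ‖((x0:ℂ)*b1 - (x1:ℂ)*b0)‖ ≤ gg) (hS02 : ‖((x0:ℂ)*b2 - (x2:ℂ)*b0)‖ ≤ gg) (hS12 : ‖((x1:ℂ)*b2 - (x2:ℂ)*b1)‖ ≤ gg) :
    ‖p*q - (a0*b0 + a1*b1 + a2*b2)‖ ≤ 1000 * (jb (t + r))⁻¹ * ((sf + gf) * gg) := by
  have hsf0 : 0 ≤ sf := by rw [hsf]; exact norm_nonneg _
  set nq := ‖p*q - (a0*b0 + a1*b1 + a2*b2)‖ with hnq
  have hnq0 : 0 ≤ nq := norm_nonneg _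
  have hsg0 : 0 ≤ sf*gg := mul_nonneg hsf0 hgg0
  have hgg2 : 0 ≤ gf*gg := mul_nonneg hgf0 hgg0
  have hQ4 : nq ≤ 4*(gf*gg) := by
    have h1 := norm_sub_le (p*q) (a0*b0 + a1*b1 + a2*b2)
    rw [← hnq, norm_mul] at h1
    have hsum := normsum3' (a0*b0) (a1*b1) (a2*b2)
    rw [norm_mul, norm_mul, norm_mul] at hsum
    linarith only [h1, hsum, mul_le_mul hp hq (norm_nonneg q) hgf0, mul_le_mul ha0 hb0 (norm_nonneg b0) hgf0,
      mul_le_mul ha1 hb1 (norm_nonneg b1) hgf0, mul_le_mul ha2 hb2 (norm_nonneg b2) hgf0]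
  have hx0r : |x0| ≤ r := abs_le_of_sq_le' (by nlinarith only [hr2, sq_nonneg x1, sq_nonneg x2]) hr
  have hx1r : |x1| ≤ r := abs_le_of_sq_le' (by nlinarith only [hr2, sq_nonneg x0, sq_nonneg x2]) hr
  have hx2r : |x2| ≤ r := abs_le_of_sq_le' (by nlinarith only [hr2, sq_nonneg x0, sq_nonneg x1]) hr
  have hr2C : ((x0:ℂ)^2 + (x1:ℂ)^2 + (x2:ℂ)^2) = ((r:ℂ))^2 := by exact_mod_cast hr2.symm
  have hLor : ((t^2 - r^2 : ℝ) : ℂ) * (p*q - (a0*b0 + a1*b1 + a2*b2)) =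
      ((t:ℂ)*p + ((x0:ℂ)*a0 + (x1:ℂ)*a1 + (x2:ℂ)*a2)) * ((t:ℂ)*q + ((x0:ℂ)*b0 + (x1:ℂ)*b1 + (x2:ℂ)*b2)) - (((t:ℂ)*a0 + (x0:ℂ)*p)*((t:ℂ)*b0 + (x0:ℂ)*q) + ((t:ℂ)*a1 + (x1:ℂ)*p)*((t:ℂ)*b1 + (x1:ℂ)*q) + ((t:ℂ)*a2 + (x2:ℂ)*p)*((t:ℂ)*b2 + (x2:ℂ)*q)) + (((x0:ℂ)*a1 - (x1:ℂ)*a0)*((x0:ℂ)*b1 - (x1:ℂ)*b0) + ((x0:ℂ)*a2 - (x2:ℂ)*a0)*((x0:ℂ)*b2 - (x2:ℂ)*b0) + ((x1:ℂ)*a2 - (x2:ℂ)*a1)*((x1:ℂ)*b2 - (x2:ℂ)*b1)) := by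
    push_cast
    linear_combination (p*q - (a0*b0 + a1*b1 + a2*b2)) * hr2C
  have hSgB : ‖((t:ℂ)*q + ((x0:ℂ)*b0 + (x1:ℂ)*b1 + (x2:ℂ)*b2))‖ ≤ (|t| + 3*r)*gg := by
    have h1 := norm_add_le ((t:ℂ)*q) ((x0:ℂ)*b0 + (x1:ℂ)*b1 + (x2:ℂ)*b2)
    have h2 := normsum3' ((x0:ℂ)*b0) ((x1:ℂ)*b1) ((x2:ℂ)*b2)
    rw [cnorm_mul'] at h1
    rw [cnorm_mul', cnorm_mul', cnorm_mul'] at h2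
    have e0 := mul_le_mul hx0r hb0 (norm_nonneg b0) hr
    have e1 := mul_le_mul hx1r hb1 (norm_nonneg b1) hr
    have e2 := mul_le_mul hx2r hb2 (norm_nonneg b2) hr
    have et := mul_le_mul_of_nonneg_left hq (abs_nonneg t)
    linarith only [h1, h2, e0, e1, e2, et]
  have hLorN : |t^2 - r^2| * nq ≤ sf * ((|t| + 3*r)*gg) + 6*(gf*gg) := by
    have hn := congrArg norm hLor
    rw [cnorm_mul', ← hnq] at hn
    have htri : ‖((t:ℂ)*p + ((x0:ℂ)*a0 + (x1:ℂ)*a1 + (x2:ℂ)*a2)) * ((t:ℂ)*q + ((x0:ℂ)*b0 + (x1:ℂ)*b1 + (x2:ℂ)*b2)) - (((t:ℂ)*a0 + (x0:ℂ)*p)*((t:ℂ)*b0 + (x0:ℂ)*q) + ((t:ℂ)*a1 + (x1:ℂ)*p)*((t:ℂ)*b1 + (x1:ℂ)*q) + ((t:ℂ)*a2 + (x2:ℂ)*p)*((t:ℂ)*b2 + (x2:ℂ)*q)) + (((x0:ℂ)*a1 - (x1:ℂ)*a0)*((x0:ℂ)*b1 - (x1:ℂ)*b0) + ((x0:ℂ)*a2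 - (x2:ℂ)*a0)*((x0:ℂ)*b2 - (x2:ℂ)*b0) + ((x1:ℂ)*a2 - (x2:ℂ)*a1)*((x1:ℂ)*b2 - (x2:ℂ)*b1))‖ ≤ ‖((t:ℂ)*p + ((x0:ℂ)*a0 + (x1:ℂ)*a1 + (x2:ℂ)*a2)) * ((t:ℂ)*q + ((x0:ℂ)*b0 + (x1:ℂ)*b1 + (x2:ℂ)*b2))‖ + ‖(((t:ℂ)*a0 + (x0:ℂ)*p)*((t:ℂ)*b0 + (x0:ℂ)*q) + ((t:ℂ)*a1 + (x1:ℂ)*p)*((t:ℂ)*b1 + (x1:ℂ)*q) + ((t:ℂ)*a2 + (x2:ℂ)*p)*((t:ℂ)*b2 + (x2:ℂ)*q))‖ + ‖(((x0:ℂ)*a1 - (x1:ℂ)*a0)*((x0:ℂ)*b1 - (x1:ℂ)*b0) + ((x0:ℂ)*a2 - (x2:ℂ)*a0)*((x0:ℂ)*b2 - (x2:ℂ)*b0) + ((x1:ℂ)*a2 - (x2:ℂ)*a1)*((x1:ℂ)*b2 - (x2:ℂ)*b1))‖ := by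
      calc ‖((t:ℂ)*p + ((x0:ℂ)*a0 + (x1:ℂ)*a1 + (x2:ℂ)*a2)) * ((t:ℂ)*q + ((x0:ℂ)*b0 + (x1:ℂ)*b1 + (x2:ℂ)*b2)) - (((t:ℂ)*a0 + (x0:ℂ)*p)*((t:ℂ)*b0 + (x0:ℂ)*q) + ((t:ℂ)*a1 + (x1:ℂ)*p)*((t:ℂ)*b1 + (x1:ℂ)*q) + ((t:ℂ)*a2 + (x2:ℂ)*p)*((t:ℂ)*b2 + (x2:ℂ)*q)) + (((x0:ℂ)*a1 - (x1:ℂ)*a0)*((x0:ℂ)*b1 - (x1:ℂ)*b0) + ((x0:ℂ)*a2 - (x2:ℂ)*a0)*((x0:ℂ)*b2 - (x2:ℂ)*b0) + ((x1:ℂ)*a2 - (x2:ℂ)*a1)*((x1:ℂ)*b2 - (x2:ℂ)*b1))‖ ≤ ‖((t:ℂ)*p + ((x0:ℂ)*a0 + (x1:ℂ)*a1 + (x2:ℂ)*a2)) * ((t:ℂ)*q + ((x0:ℂ)*b0 + (x1:ℂ)*b1 + (x2:ℂ)*b2)) - (((t:ℂ)*a0 + (x0:ℂ)*p)*((t:ℂ)*b0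 + (x0:ℂ)*q) + ((t:ℂ)*a1 + (x1:ℂ)*p)*((t:ℂ)*b1 + (x1:ℂ)*q) + ((t:ℂ)*a2 + (x2:ℂ)*p)*((t:ℂ)*b2 + (x2:ℂ)*q))‖ + ‖(((x0:ℂ)*a1 - (x1:ℂ)*a0)*((x0:ℂ)*b1 - (x1:ℂ)*b0) + ((x0:ℂ)*a2 - (x2:ℂ)*a0)*((x0:ℂ)*b2 - (x2:ℂ)*b0) + ((x1:ℂ)*a2 - (x2:ℂ)*a1)*((x1:ℂ)*b2 - (x2:ℂ)*b1))‖ := norm_add_le _ _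
        _ ≤ ‖((t:ℂ)*p + ((x0:ℂ)*a0 + (x1:ℂ)*a1 + (x2:ℂ)*a2)) * ((t:ℂ)*q + ((x0:ℂ)*b0 + (x1:ℂ)*b1 + (x2:ℂ)*b2))‖ + ‖(((t:ℂ)*a0 + (x0:ℂ)*p)*((t:ℂ)*b0 + (x0:ℂ)*q) + ((t:ℂ)*a1 + (x1:ℂ)*p)*((t:ℂ)*b1 + (x1:ℂ)*q) + ((t:ℂ)*a2 + (x2:ℂ)*p)*((t:ℂ)*b2 + (x2:ℂ)*q))‖ + ‖(((x0:ℂ)*a1 - (x1:ℂ)*a0)*((x0:ℂ)*b1 - (x1:ℂ)*b0) + ((x0:ℂ)*a2 - (x2:ℂ)*a0)*((x0:ℂ)*b2 - (x2:ℂ)*b0) + ((x1:ℂ)*a2 - (x2:ℂ)*a1)*((x1:ℂ)*b2 - (x2:ℂ)*b1))‖ := by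
            linarith only [norm_sub_le (((t:ℂ)*p + ((x0:ℂ)*a0 + (x1:ℂ)*a1 + (x2:ℂ)*a2)) * ((t:ℂ)*q + ((x0:ℂ)*b0 + (x1:ℂ)*b1 + (x2:ℂ)*b2))) (((t:ℂ)*a0 + (x0:ℂ)*p)*((t:ℂ)*b0 + (x0:ℂ)*q) + ((t:ℂ)*a1 + (x1:ℂ)*p)*((t:ℂ)*b1 + (x1:ℂ)*q) + ((t:ℂ)*a2 + (x2:ℂ)*p)*((t:ℂ)*b2 + (x2:ℂ)*q)), norm_add_le (((t:ℂ)*p + ((x0:ℂ)*a0 + (x1:ℂ)*a1 + (x2:ℂ)*a2)) * ((t:ℂ)*q + ((x0:ℂ)*b0 + (x1:ℂ)*b1 + (x2:ℂ)*b2)) - (((t:ℂ)*a0 + (x0:ℂ)*p)*((t:ℂ)*b0 + (x0:ℂ)*q) + ((t:ℂ)*a1 + (x1:ℂ)*p)*((t:ℂ)*b1 + (x1:ℂ)*q) + ((t:ℂ)*a2 + (x2:ℂ)*p)*((t:ℂ)*b2 + (x2:ℂ)*q))) (((x0:ℂ)*a1 - (x1:ℂ)*a0)*((x0:ℂ)*b1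 - (x1:ℂ)*b0) + ((x0:ℂ)*a2 - (x2:ℂ)*a0)*((x0:ℂ)*b2 - (x2:ℂ)*b0) + ((x1:ℂ)*a2 - (x2:ℂ)*a1)*((x1:ℂ)*b2 - (x2:ℂ)*b1))]
    have hX : ‖((t:ℂ)*p + ((x0:ℂ)*a0 + (x1:ℂ)*a1 + (x2:ℂ)*a2)) * ((t:ℂ)*q + ((x0:ℂ)*b0 + (x1:ℂ)*b1 + (x2:ℂ)*b2))‖ ≤ sf * ((|t| + 3*r)*gg) := by
      rw [norm_mul, ← hsf]
      exact mul_le_mul_of_nonneg_left hSgB hsf0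
    have hY : ‖(((t:ℂ)*a0 + (x0:ℂ)*p)*((t:ℂ)*b0 + (x0:ℂ)*q) + ((t:ℂ)*a1 + (x1:ℂ)*p)*((t:ℂ)*b1 + (x1:ℂ)*q) + ((t:ℂ)*a2 + (x2:ℂ)*p)*((t:ℂ)*b2 + (x2:ℂ)*q))‖ ≤ 3*(gf*gg) := by
      have h2 := normsum3' (((t:ℂ)*a0 + (x0:ℂ)*p)*((t:ℂ)*b0 + (x0:ℂ)*q)) (((t:ℂ)*a1 + (x1:ℂ)*p)*((t:ℂ)*b1 + (x1:ℂ)*q)) (((t:ℂ)*a2 + (x2:ℂ)*p)*((t:ℂ)*b2 + (x2:ℂ)*q))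
      rw [norm_mul, norm_mul, norm_mul] at h2
      linarith only [h2, mul_le_mul hB0 hC0 (norm_nonneg ((t:ℂ)*b0 + (x0:ℂ)*q)) hgf0,
        mul_le_mul hB1 hC1 (norm_nonneg ((t:ℂ)*b1 + (x1:ℂ)*q)) hgf0,
        mul_le_mul hB2 hC2 (norm_nonneg ((t:ℂ)*b2 + (x2:ℂ)*q)) hgf0]
    have hZ : ‖(((x0:ℂ)*a1 - (x1:ℂ)*a0)*((x0:ℂ)*b1 - (x1:ℂ)*b0) + ((x0:ℂ)*a2 - (x2:ℂ)*a0)*((x0:ℂ)*b2 - (x2:ℂ)*b0) + ((x1:ℂ)*a2 - (x2:ℂ)*a1)*((x1:ℂ)*b2 - (x2:ℂ)*b1))‖ ≤ 3*(gf*gg) := by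
      have h2 := normsum3' (((x0:ℂ)*a1 - (x1:ℂ)*a0)*((x0:ℂ)*b1 - (x1:ℂ)*b0)) (((x0:ℂ)*a2 - (x2:ℂ)*a0)*((x0:ℂ)*b2 - (x2:ℂ)*b0)) (((x1:ℂ)*a2 - (x2:ℂ)*a1)*((x1:ℂ)*b2 - (x2:ℂ)*b1))
      rw [norm_mul, norm_mul, norm_mul] at h2
      linarith only [h2, mul_le_mul hR01 hS01 (norm_nonneg ((x0:ℂ)*b1 - (x1:ℂ)*b0)) hgf0,
        mul_le_mul hR02 hS02 (norm_nonneg ((x0:ℂ)*b2 - (x2:ℂ)*b0)) hgf0,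
        mul_le_mul hR12 hS12 (norm_nonneg ((x1:ℂ)*b2 - (x2:ℂ)*b1)) hgf0]
    rw [hn]
    linarith only [htri, hX, hY, hZ]
  have hmain : |t + r| * nq ≤ 500*((sf+gf)*gg) := by
    rcases le_or_gt (t+r) (-1) with hneg | hgt
    · -- t+r ≤ -1
      have hrt : 1 ≤ r - t := by linarith
      have h0rt : (0:ℝ) ≤ r - t := by linarith
      have habs1 : |t+r| = -(t+r) := abs_of_nonpos (by linarith)
      have habs2 : |t^2 - r^2| = (r - t) * (-(t+r)) := by
        rw [abs_of_nonneg (by nlinarith only [mul_nonneg (by linarith only [hneg] : (0:ℝ) ≤ -(t+r)) h0rt] :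
          (0:ℝ) ≤ t^2 - r^2)]
        ring
      have hT : |t| = -t := abs_of_nonpos (by linarith)
      rw [habs2, hT] at hLorN
      rw [habs1]
      have stepn1 : sf*((-t + 3*r)*gg) ≤ sf*((3*(r-t))*gg) :=
        mul_le_mul_of_nonneg_left
          (mul_le_mul_of_nonneg_right (by linarith only [hneg, hr] : -t + 3*r ≤ 3*(r-t)) hgg0) hsf0
      have stepn2 : 6*(gf*gg) ≤ 6*((r-t)*(gf*gg)) := by
        have h := mul_le_mul_of_nonneg_right hrt hgg2
        linarith only [h]
      have stepn3 : 3*((r-t)*(sf*gg)) + 6*((r-t)*(gf*gg)) ≤ (r-t)*(500*((sf+gf)*gg)) := by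
        nlinarith only [mul_nonneg (mul_nonneg h0rt hsf0) hgg0,
          mul_nonneg (mul_nonneg h0rt hgf0) hgg0]
      have hfin : (r-t) * ((-(t+r)) * nq) ≤ (r-t) * (500*((sf+gf)*gg)) := by
        nlinarith only [hLorN, stepn1, stepn2, stepn3]
      exact le_of_mul_le_mul_left hfin (by linarith only [hrt])
    rcases le_or_gt 1 (t+r) with hpos | hlt
    · rcases lt_or_ge (2*r) t with hint | hext
      · -- interior: 2r < t
        have ht23 : 2/3 ≤ t := by linarith
        have htr3 : 1/3 ≤ t - r := by linarith
        have h0tr : (0:ℝ) ≤ t - r := by linarith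
        rw [abs_of_pos (by linarith only [hpos] : (0:ℝ) < t + r)]
        rw [abs_of_nonneg (by nlinarith only [mul_nonneg h0tr (by linarith only [hpos] : (0:ℝ) ≤ t + r)] :
          (0:ℝ) ≤ t^2 - r^2), abs_of_pos (by linarith only [ht23] : (0:ℝ) < t)] at hLorN
        have stepi1 : sf*((t + 3*r)*gg) ≤ sf*((5*(t-r))*gg) :=
          mul_le_mul_of_nonneg_left
            (mul_le_mul_of_nonneg_right (by linarith only [hint] : t + 3*r ≤ 5*(t-r)) hgg0) hsf0
        have stepi2 : 6*(gf*gg) ≤ 18*((t-r)*(gf*gg)) := by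
          have h := mul_le_mul_of_nonneg_right htr3 hgg2
          linarith only [h]
        have stepi3 : 5*((t-r)*(sf*gg)) + 18*((t-r)*(gf*gg)) ≤ (t-r)*(500*((sf+gf)*gg)) := by
          nlinarith only [mul_nonneg (mul_nonneg h0tr hsf0) hgg0,
            mul_nonneg (mul_nonneg h0tr hgf0) hgg0]
        have hfin : (t-r)*((t+r)*nq) ≤ (t-r)*(500*((sf+gf)*gg)) := by
          nlinarith only [hLorN, stepi1, stepi2, stepi3]
        exact le_of_mul_le_mul_left hfin (by linarith only [htr3])
      · -- exterior: t ≤ 2r, t+r >= 1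
        have hrpos : (0:ℝ) < r := by linarith only [hpos, hext]
        obtain ⟨w0, w1, w2, e0, e1, e2, hw⟩ :
            ∃ w0 w1 w2 : ℝ, x0 = r*w0 ∧ x1 = r*w1 ∧ x2 = r*w2 ∧ w0^2+w1^2+w2^2 = 1 := by
          refine ⟨x0/r, x1/r, x2/r, by field_simp, by field_simp, by field_simp, ?_⟩
          field_simp
          linarith [hr2]
        subst e0 e1 e2
        push_cast at hsf hB0 hB1 hB2 hR01 hR02 hR12 hC0 hC1 hC2 hS01 hS02 hS12
        have hw0 : |w0| ≤ 1 := abs_le_of_sq_le' (by nlinarith only [hw, sq_nonneg w1, sq_nonneg w2]) zero_le_one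
        have hw1 : |w1| ≤ 1 := abs_le_of_sq_le' (by nlinarith only [hw, sq_nonneg w0, sq_nonneg w2]) zero_le_one
        have hw2 : |w2| ≤ 1 := abs_le_of_sq_le' (by nlinarith only [hw, sq_nonneg w0, sq_nonneg w1]) zero_le_one
        have hwC : ((w0:ℂ))^2 + ((w1:ℂ))^2 + ((w2:ℂ))^2 = 1 := by exact_mod_cast hw
        have hGrand : ((r*(t+r) : ℝ):ℂ) * (p*q - (a0*b0 + a1*b1 + a2*b2)) =
            (((r/2 : ℝ):ℂ) * ((((t:ℂ)*p + ((r:ℂ)*(w0:ℂ)*a0 + (r:ℂ)*(w1:ℂ)*a1 + (r:ℂ)*(w2:ℂ)*a2)) + ((w0:ℂ)*((t:ℂ)*a0 + (r:ℂ)*(w0:ℂ)*p) + (w1:ℂ)*((t:ℂ)*a1 + (r:ℂ)*(w1:ℂ)*p) + (w2:ℂ)*((t:ℂ)*a2 + (r:ℂ)*(w2:ℂ)*p))) * (q - ((w0:ℂ)*b0 + (w1:ℂ)*b1 + (w2:ℂ)*b2)))) + ((((t+r)/2 : ℝ):ℂ) * ((p - ((w0:ℂ)*a0 + (w1:ℂ)*a1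 + (w2:ℂ)*a2)) * ((w0:ℂ)*((t:ℂ)*b0 + (r:ℂ)*(w0:ℂ)*q) + (w1:ℂ)*((t:ℂ)*b1 + (r:ℂ)*(w1:ℂ)*q) + (w2:ℂ)*((t:ℂ)*b2 + (r:ℂ)*(w2:ℂ)*q)) - (((t:ℂ)*p + ((r:ℂ)*(w0:ℂ)*a0 + (r:ℂ)*(w1:ℂ)*a1 + (r:ℂ)*(w2:ℂ)*a2)) - ((w0:ℂ)*((t:ℂ)*a0 + (r:ℂ)*(w0:ℂ)*p) + (w1:ℂ)*((t:ℂ)*a1 + (r:ℂ)*(w1:ℂ)*p) + (w2:ℂ)*((t:ℂ)*a2 + (r:ℂ)*(w2:ℂ)*p))) * ((w0:ℂ)*b0 + (w1:ℂ)*b1 + (w2:ℂ)*b2))) - (((r*(t+r) : ℝ):ℂ) * (((w0:ℂ)*a1 - (w1:ℂ)*a0)*((w0:ℂ)*b1 - (w1:ℂ)*b0) + ((w0:ℂ)*a2 - (w2:ℂ)*a0)*((w0:ℂ)*b2 - (w2:ℂ)*b0) + ((w1:ℂ)*a2 - (w2:ℂ)*a1)*((w1:ℂ)*b2 - (w2:ℂ)*b1)))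 := by
          push_cast
          linear_combination (-(((r:ℂ)^2/2)*p*(q - ((w0:ℂ)*b0 + (w1:ℂ)*b1 + (w2:ℂ)*b2)) + ((r:ℂ)*((t:ℂ)+(r:ℂ))/2)*(q*(p - ((w0:ℂ)*a0 + (w1:ℂ)*a1 + (w2:ℂ)*a2)) + p*((w0:ℂ)*b0 + (w1:ℂ)*b1 + (w2:ℂ)*b2)) - (r:ℂ)*((t:ℂ)+(r:ℂ))*(a0*b0+a1*b1+a2*b2))) * hwC
        have nA : ‖((w0:ℂ)*a0 + (w1:ℂ)*a1 + (w2:ℂ)*a2)‖ ≤ 3*gf := by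
          have h := normsum3' ((w0:ℂ)*a0) ((w1:ℂ)*a1) ((w2:ℂ)*a2)
          rw [cnorm_mul', cnorm_mul', cnorm_mul'] at h
          linarith only [h, mul_le_mul hw0 ha0 (norm_nonneg a0) zero_le_one,
            mul_le_mul hw1 ha1 (norm_nonneg a1) zero_le_one,
            mul_le_mul hw2 ha2 (norm_nonneg a2) zero_le_one]
        have nBv : ‖((w0:ℂ)*b0 + (w1:ℂ)*b1 + (w2:ℂ)*b2)‖ ≤ 3*gg := by
          have h := normsum3' ((w0:ℂ)*b0) ((w1:ℂ)*b1) ((w2:ℂ)*b2)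
          rw [cnorm_mul', cnorm_mul', cnorm_mul'] at h
          linarith only [h, mul_le_mul hw0 hb0 (norm_nonneg b0) zero_le_one,
            mul_le_mul hw1 hb1 (norm_nonneg b1) zero_le_one,
            mul_le_mul hw2 hb2 (norm_nonneg b2) zero_le_one]
        have nOBf : ‖((w0:ℂ)*((t:ℂ)*a0 + (r:ℂ)*(w0:ℂ)*p) + (w1:ℂ)*((t:ℂ)*a1 + (r:ℂ)*(w1:ℂ)*p) + (w2:ℂ)*((t:ℂ)*a2 + (r:ℂ)*(w2:ℂ)*p))‖ ≤ 3*gf := by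
          have h := normsum3' ((w0:ℂ)*((t:ℂ)*a0 + (r:ℂ)*(w0:ℂ)*p)) ((w1:ℂ)*((t:ℂ)*a1 + (r:ℂ)*(w1:ℂ)*p)) ((w2:ℂ)*((t:ℂ)*a2 + (r:ℂ)*(w2:ℂ)*p))
          rw [cnorm_mul', cnorm_mul', cnorm_mul'] at h
          linarith only [h, mul_le_mul hw0 hB0 (norm_nonneg ((t:ℂ)*a0 + (r:ℂ)*(w0:ℂ)*p)) zero_le_one,
            mul_le_mul hw1 hB1 (norm_nonneg ((t:ℂ)*a1 + (r:ℂ)*(w1:ℂ)*p)) zero_le_one,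
            mul_le_mul hw2 hB2 (norm_nonneg ((t:ℂ)*a2 + (r:ℂ)*(w2:ℂ)*p)) zero_le_one]
        have nOBg : ‖((w0:ℂ)*((t:ℂ)*b0 + (r:ℂ)*(w0:ℂ)*q) + (w1:ℂ)*((t:ℂ)*b1 + (r:ℂ)*(w1:ℂ)*q) + (w2:ℂ)*((t:ℂ)*b2 + (r:ℂ)*(w2:ℂ)*q))‖ ≤ 3*gg := by
          have h := normsum3' ((w0:ℂ)*((t:ℂ)*b0 + (r:ℂ)*(w0:ℂ)*q)) ((w1:ℂ)*((t:ℂ)*b1 + (r:ℂ)*(w1:ℂ)*q)) ((w2:ℂ)*((t:ℂ)*b2 + (r:ℂ)*(w2:ℂ)*q))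
          rw [cnorm_mul', cnorm_mul', cnorm_mul'] at h
          linarith only [h, mul_le_mul hw0 hC0 (norm_nonneg ((t:ℂ)*b0 + (r:ℂ)*(w0:ℂ)*q)) zero_le_one,
            mul_le_mul hw1 hC1 (norm_nonneg ((t:ℂ)*b1 + (r:ℂ)*(w1:ℂ)*q)) zero_le_one,
            mul_le_mul hw2 hC2 (norm_nonneg ((t:ℂ)*b2 + (r:ℂ)*(w2:ℂ)*q)) zero_le_one]
        have npA : ‖p - ((w0:ℂ)*a0 + (w1:ℂ)*a1 + (w2:ℂ)*a2)‖ ≤ 4*gf := (norm_sub_le _ _).trans (by linarith only [hp, nA])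
        have nqB : ‖q - ((w0:ℂ)*b0 + (w1:ℂ)*b1 + (w2:ℂ)*b2)‖ ≤ 4*gg := (norm_sub_le _ _).trans (by linarith only [hq, nBv])
        have nSplus : ‖((t:ℂ)*p + ((r:ℂ)*(w0:ℂ)*a0 + (r:ℂ)*(w1:ℂ)*a1 + (r:ℂ)*(w2:ℂ)*a2)) + ((w0:ℂ)*((t:ℂ)*a0 + (r:ℂ)*(w0:ℂ)*p) + (w1:ℂ)*((t:ℂ)*a1 + (r:ℂ)*(w1:ℂ)*p) + (w2:ℂ)*((t:ℂ)*a2 + (r:ℂ)*(w2:ℂ)*p))‖ ≤ sf + 3*gf := by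
          have h := norm_add_le ((t:ℂ)*p + ((r:ℂ)*(w0:ℂ)*a0 + (r:ℂ)*(w1:ℂ)*a1 + (r:ℂ)*(w2:ℂ)*a2)) ((w0:ℂ)*((t:ℂ)*a0 + (r:ℂ)*(w0:ℂ)*p) + (w1:ℂ)*((t:ℂ)*a1 + (r:ℂ)*(w1:ℂ)*p) + (w2:ℂ)*((t:ℂ)*a2 + (r:ℂ)*(w2:ℂ)*p))
          rw [← hsf] at h
          linarith only [h, nOBf]
        have nSminus : ‖((t:ℂ)*p + ((r:ℂ)*(w0:ℂ)*a0 + (r:ℂ)*(w1:ℂ)*a1 + (r:ℂ)*(w2:ℂ)*a2)) - ((w0:ℂ)*((t:ℂ)*a0 + (r:ℂ)*(w0:ℂ)*p) + (w1:ℂ)*((t:ℂ)*a1 + (r:ℂ)*(w1:ℂ)*p) + (w2:ℂ)*((t:ℂ)*a2 + (r:ℂ)*(w2:ℂ)*p))‖ ≤ sf + 3*gf := by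
          have h := norm_sub_le ((t:ℂ)*p + ((r:ℂ)*(w0:ℂ)*a0 + (r:ℂ)*(w1:ℂ)*a1 + (r:ℂ)*(w2:ℂ)*a2)) ((w0:ℂ)*((t:ℂ)*a0 + (r:ℂ)*(w0:ℂ)*p) + (w1:ℂ)*((t:ℂ)*a1 + (r:ℂ)*(w1:ℂ)*p) + (w2:ℂ)*((t:ℂ)*a2 + (r:ℂ)*(w2:ℂ)*p))
          rw [← hsf] at h
          linarith only [h, nOBf]
        have hrotf01 : r * ‖((w0:ℂ)*a1 - (w1:ℂ)*a0)‖ ≤ gf := by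
          rw [show ((r:ℂ)*(w0:ℂ)*a1 - (r:ℂ)*(w1:ℂ)*a0) = (r:ℂ)*((w0:ℂ)*a1 - (w1:ℂ)*a0) from by ring,
            cnorm_mul', abs_of_nonneg hr] at hR01
          exact hR01
        have hrotf02 : r * ‖((w0:ℂ)*a2 - (w2:ℂ)*a0)‖ ≤ gf := by
          rw [show ((r:ℂ)*(w0:ℂ)*a2 - (r:ℂ)*(w2:ℂ)*a0) = (r:ℂ)*((w0:ℂ)*a2 - (w2:ℂ)*a0) from by ring,
            cnorm_mul', abs_of_nonneg hr] at hR02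
          exact hR02
        have hrotf12 : r * ‖((w1:ℂ)*a2 - (w2:ℂ)*a1)‖ ≤ gf := by
          rw [show ((r:ℂ)*(w1:ℂ)*a2 - (r:ℂ)*(w2:ℂ)*a1) = (r:ℂ)*((w1:ℂ)*a2 - (w2:ℂ)*a1) from by ring,
            cnorm_mul', abs_of_nonneg hr] at hR12
          exact hR12
        have hrotg01 : r * ‖((w0:ℂ)*b1 - (w1:ℂ)*b0)‖ ≤ gg := by
          rw [show ((r:ℂ)*(w0:ℂ)*b1 - (r:ℂ)*(w1:ℂ)*b0) = (r:ℂ)*((w0:ℂ)*b1 - (w1:ℂ)*b0) from by ring,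
            cnorm_mul', abs_of_nonneg hr] at hS01
          exact hS01
        have hrotg02 : r * ‖((w0:ℂ)*b2 - (w2:ℂ)*b0)‖ ≤ gg := by
          rw [show ((r:ℂ)*(w0:ℂ)*b2 - (r:ℂ)*(w2:ℂ)*b0) = (r:ℂ)*((w0:ℂ)*b2 - (w2:ℂ)*b0) from by ring,
            cnorm_mul', abs_of_nonneg hr] at hS02
          exact hS02
        have hrotg12 : r * ‖((w1:ℂ)*b2 - (w2:ℂ)*b1)‖ ≤ gg := by
          rw [show ((r:ℂ)*(w1:ℂ)*b2 - (r:ℂ)*(w2:ℂ)*b1) = (r:ℂ)*((w1:ℂ)*b2 - (w2:ℂ)*b1) from by ring,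
            cnorm_mul', abs_of_nonneg hr] at hS12
          exact hS12
        have nT1 : ‖(((r/2 : ℝ):ℂ) * ((((t:ℂ)*p + ((r:ℂ)*(w0:ℂ)*a0 + (r:ℂ)*(w1:ℂ)*a1 + (r:ℂ)*(w2:ℂ)*a2)) + ((w0:ℂ)*((t:ℂ)*a0 + (r:ℂ)*(w0:ℂ)*p) + (w1:ℂ)*((t:ℂ)*a1 + (r:ℂ)*(w1:ℂ)*p) + (w2:ℂ)*((t:ℂ)*a2 + (r:ℂ)*(w2:ℂ)*p))) * (q - ((w0:ℂ)*b0 + (w1:ℂ)*b1 + (w2:ℂ)*b2))))‖ ≤ (r/2) * ((sf+3*gf) * (4*gg)) := by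
          rw [cnorm_mul', abs_of_nonneg (by linarith only [hr] : (0:ℝ) ≤ r/2), norm_mul]
          exact mul_le_mul_of_nonneg_left
            (mul_le_mul nSplus nqB (norm_nonneg _) (by linarith only [hsf0, hgf0])) (by linarith only [hr])
        have nT2 : ‖((((t+r)/2 : ℝ):ℂ) * ((p - ((w0:ℂ)*a0 + (w1:ℂ)*a1 + (w2:ℂ)*a2)) * ((w0:ℂ)*((t:ℂ)*b0 + (r:ℂ)*(w0:ℂ)*q) + (w1:ℂ)*((t:ℂ)*b1 + (r:ℂ)*(w1:ℂ)*q) + (w2:ℂ)*((t:ℂ)*b2 + (r:ℂ)*(w2:ℂ)*q)) - (((t:ℂ)*p + ((r:ℂ)*(w0:ℂ)*a0 + (r:ℂ)*(w1:ℂ)*a1 + (r:ℂ)*(w2:ℂ)*a2)) - ((w0:ℂ)*((t:ℂ)*a0 + (r:ℂ)*(w0:ℂ)*p) + (w1:ℂ)*((t:ℂ)*a1 + (r:ℂ)*(w1:ℂ)*p) + (w2:ℂ)*((t:ℂ)*a2 + (r:ℂ)*(w2:ℂ)*p))) * ((w0:ℂ)*b0 + (w1:ℂ)*b1 + (w2:ℂ)*b2)))‖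 ≤ ((t+r)/2) * (4*gf*(3*gg) + (sf+3*gf)*(3*gg)) := by
          rw [cnorm_mul', abs_of_nonneg (by linarith only [hpos] : (0:ℝ) ≤ (t+r)/2)]
          refine mul_le_mul_of_nonneg_left ?_ (by linarith only [hpos])
          have h := norm_sub_le ((p - ((w0:ℂ)*a0 + (w1:ℂ)*a1 + (w2:ℂ)*a2)) * ((w0:ℂ)*((t:ℂ)*b0 + (r:ℂ)*(w0:ℂ)*q) + (w1:ℂ)*((t:ℂ)*b1 + (r:ℂ)*(w1:ℂ)*q) + (w2:ℂ)*((t:ℂ)*b2 + (r:ℂ)*(w2:ℂ)*q))) ((((t:ℂ)*p + ((r:ℂ)*(w0:ℂ)*a0 + (r:ℂ)*(w1:ℂ)*a1 + (r:ℂ)*(w2:ℂ)*a2)) - ((w0:ℂ)*((t:ℂ)*a0 + (r:ℂ)*(w0:ℂ)*p) + (w1:ℂ)*((t:ℂ)*a1 + (r:ℂ)*(w1:ℂ)*p) + (w2:ℂ)*((t:ℂ)*a2 + (r:ℂ)*(w2:ℂ)*p))) * ((w0:ℂ)*b0 + (w1:ℂ)*b1 + (w2:ℂ)*b2))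
          rw [norm_mul, norm_mul] at h
          linarith only [h, mul_le_mul npA nOBg (norm_nonneg ((w0:ℂ)*((t:ℂ)*b0 + (r:ℂ)*(w0:ℂ)*q) + (w1:ℂ)*((t:ℂ)*b1 + (r:ℂ)*(w1:ℂ)*q) + (w2:ℂ)*((t:ℂ)*b2 + (r:ℂ)*(w2:ℂ)*q))) (by linarith only [hgf0] : (0:ℝ) ≤ 4*gf),
            mul_le_mul nSminus nBv (norm_nonneg ((w0:ℂ)*b0 + (w1:ℂ)*b1 + (w2:ℂ)*b2)) (by linarith only [hsf0, hgf0] : (0:ℝ) ≤ sf+3*gf)]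
        have nT3 : ‖(((r*(t+r) : ℝ):ℂ) * (((w0:ℂ)*a1 - (w1:ℂ)*a0)*((w0:ℂ)*b1 - (w1:ℂ)*b0) + ((w0:ℂ)*a2 - (w2:ℂ)*a0)*((w0:ℂ)*b2 - (w2:ℂ)*b0) + ((w1:ℂ)*a2 - (w2:ℂ)*a1)*((w1:ℂ)*b2 - (w2:ℂ)*b1)))‖ ≤ 9*(gf*gg) := by
          rw [cnorm_mul', abs_of_nonneg (mul_nonneg hr (by linarith only [hpos]))]
          have hs := normsum3' (((w0:ℂ)*a1 - (w1:ℂ)*a0)*((w0:ℂ)*b1 - (w1:ℂ)*b0)) (((w0:ℂ)*a2 - (w2:ℂ)*a0)*((w0:ℂ)*b2 - (w2:ℂ)*b0)) (((w1:ℂ)*a2 - (w2:ℂ)*a1)*((w1:ℂ)*b2 - (w2:ℂ)*b1))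
          rw [norm_mul, norm_mul, norm_mul] at hs
          have m01 : r^2*(‖((w0:ℂ)*a1 - (w1:ℂ)*a0)‖*‖((w0:ℂ)*b1 - (w1:ℂ)*b0)‖) ≤ gf*gg := by
            calc r^2*(‖((w0:ℂ)*a1 - (w1:ℂ)*a0)‖*‖((w0:ℂ)*b1 - (w1:ℂ)*b0)‖) = (r*‖((w0:ℂ)*a1 - (w1:ℂ)*a0)‖)*(r*‖((w0:ℂ)*b1 - (w1:ℂ)*b0)‖) := by ring
              _ ≤ gf*gg := mul_le_mul hrotf01 hrotg01 (mul_nonneg hr (norm_nonneg _)) hgf0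
          have m02 : r^2*(‖((w0:ℂ)*a2 - (w2:ℂ)*a0)‖*‖((w0:ℂ)*b2 - (w2:ℂ)*b0)‖) ≤ gf*gg := by
            calc r^2*(‖((w0:ℂ)*a2 - (w2:ℂ)*a0)‖*‖((w0:ℂ)*b2 - (w2:ℂ)*b0)‖) = (r*‖((w0:ℂ)*a2 - (w2:ℂ)*a0)‖)*(r*‖((w0:ℂ)*b2 - (w2:ℂ)*b0)‖) := by ring
              _ ≤ gf*gg := mul_le_mul hrotf02 hrotg02 (mul_nonneg hr (norm_nonneg _)) hgf0
          have m12 : r^2*(‖((w1:ℂ)*a2 - (w2:ℂ)*a1)‖*‖((w1:ℂ)*b2 - (w2:ℂ)*b1)‖) ≤ gf*gg := by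
            calc r^2*(‖((w1:ℂ)*a2 - (w2:ℂ)*a1)‖*‖((w1:ℂ)*b2 - (w2:ℂ)*b1)‖) = (r*‖((w1:ℂ)*a2 - (w2:ℂ)*a1)‖)*(r*‖((w1:ℂ)*b2 - (w2:ℂ)*b1)‖) := by ring
              _ ≤ gf*gg := mul_le_mul hrotf12 hrotg12 (mul_nonneg hr (norm_nonneg _)) hgf0
          have hrr : r*(t+r) ≤ 3*r^2 := by nlinarith only [mul_le_mul_of_nonneg_left (by linarith only [hext] : t+r ≤ 3*r) hr]
          calc r*(t+r) * ‖(((w0:ℂ)*a1 - (w1:ℂ)*a0)*((w0:ℂ)*b1 - (w1:ℂ)*b0) + ((w0:ℂ)*a2 - (w2:ℂ)*a0)*((w0:ℂ)*b2 - (w2:ℂ)*b0) + ((w1:ℂ)*a2 - (w2:ℂ)*a1)*((w1:ℂ)*b2 - (w2:ℂ)*b1))‖ ≤ (3*r^2) * ‖(((w0:ℂ)*a1 - (w1:ℂ)*a0)*((w0:ℂ)*b1 - (w1:ℂ)*b0) + ((w0:ℂ)*a2 - (w2:ℂ)*a0)*((w0:ℂ)*b2 - (w2:ℂ)*b0) +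 ((w1:ℂ)*a2 - (w2:ℂ)*a1)*((w1:ℂ)*b2 - (w2:ℂ)*b1))‖ :=
              mul_le_mul_of_nonneg_right hrr (norm_nonneg _)
            _ ≤ (3*r^2) * (‖((w0:ℂ)*a1 - (w1:ℂ)*a0)‖*‖((w0:ℂ)*b1 - (w1:ℂ)*b0)‖ + ‖((w0:ℂ)*a2 - (w2:ℂ)*a0)‖*‖((w0:ℂ)*b2 - (w2:ℂ)*b0)‖ + ‖((w1:ℂ)*a2 - (w2:ℂ)*a1)‖*‖((w1:ℂ)*b2 - (w2:ℂ)*b1)‖) :=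
              mul_le_mul_of_nonneg_left hs (by positivity)
            _ = 3*(r^2*(‖((w0:ℂ)*a1 - (w1:ℂ)*a0)‖*‖((w0:ℂ)*b1 - (w1:ℂ)*b0)‖)) + 3*(r^2*(‖((w0:ℂ)*a2 - (w2:ℂ)*a0)‖*‖((w0:ℂ)*b2 - (w2:ℂ)*b0)‖)) + 3*(r^2*(‖((w1:ℂ)*a2 - (w2:ℂ)*a1)‖*‖((w1:ℂ)*b2 - (w2:ℂ)*b1)‖)) := by ring
            _ ≤ 9*(gf*gg) := by linarith only [m01, m02, m12]
        have hGn := congrArg norm hGrand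
        rw [cnorm_mul', ← hnq, abs_of_nonneg (mul_nonneg hr (by linarith only [hpos] : (0:ℝ) ≤ t+r))] at hGn
        have htri : ‖(((r/2 : ℝ):ℂ) * ((((t:ℂ)*p + ((r:ℂ)*(w0:ℂ)*a0 + (r:ℂ)*(w1:ℂ)*a1 + (r:ℂ)*(w2:ℂ)*a2)) + ((w0:ℂ)*((t:ℂ)*a0 + (r:ℂ)*(w0:ℂ)*p) + (w1:ℂ)*((t:ℂ)*a1 + (r:ℂ)*(w1:ℂ)*p) + (w2:ℂ)*((t:ℂ)*a2 + (r:ℂ)*(w2:ℂ)*p))) * (q - ((w0:ℂ)*b0 + (w1:ℂ)*b1 + (w2:ℂ)*b2)))) + ((((t+r)/2 : ℝ):ℂ) * ((p - ((w0:ℂ)*a0 + (w1:ℂ)*a1 + (w2:ℂ)*a2)) * ((w0:ℂ)*((t:ℂ)*b0 + (r:ℂ)*(w0:ℂ)*q) + (w1:ℂ)*((t:ℂ)*b1 + (r:ℂ)*(w1:ℂ)*q) + (w2:ℂ)*((t:ℂ)*b2 + (r:ℂ)*(w2:ℂ)*q)) - (((t:ℂ)*p + ((r:ℂ)*(w0:ℂ)*a0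 + (r:ℂ)*(w1:ℂ)*a1 + (r:ℂ)*(w2:ℂ)*a2)) - ((w0:ℂ)*((t:ℂ)*a0 + (r:ℂ)*(w0:ℂ)*p) + (w1:ℂ)*((t:ℂ)*a1 + (r:ℂ)*(w1:ℂ)*p) + (w2:ℂ)*((t:ℂ)*a2 + (r:ℂ)*(w2:ℂ)*p))) * ((w0:ℂ)*b0 + (w1:ℂ)*b1 + (w2:ℂ)*b2))) - (((r*(t+r) : ℝ):ℂ) * (((w0:ℂ)*a1 - (w1:ℂ)*a0)*((w0:ℂ)*b1 - (w1:ℂ)*b0) + ((w0:ℂ)*a2 - (w2:ℂ)*a0)*((w0:ℂ)*b2 - (w2:ℂ)*b0) + ((w1:ℂ)*a2 - (w2:ℂ)*a1)*((w1:ℂ)*b2 - (w2:ℂ)*b1)))‖ ≤ ‖(((r/2 : ℝ):ℂ) * ((((t:ℂ)*p + ((r:ℂ)*(w0:ℂ)*a0 + (r:ℂ)*(w1:ℂ)*a1 + (r:ℂ)*(w2:ℂ)*a2)) + ((w0:ℂ)*((t:ℂ)*a0 + (r:ℂ)*(w0:ℂ)*p) + (w1:ℂ)*((t:ℂ)*a1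 + (r:ℂ)*(w1:ℂ)*p) + (w2:ℂ)*((t:ℂ)*a2 + (r:ℂ)*(w2:ℂ)*p))) * (q - ((w0:ℂ)*b0 + (w1:ℂ)*b1 + (w2:ℂ)*b2))))‖ + ‖((((t+r)/2 : ℝ):ℂ) * ((p - ((w0:ℂ)*a0 + (w1:ℂ)*a1 + (w2:ℂ)*a2)) * ((w0:ℂ)*((t:ℂ)*b0 + (r:ℂ)*(w0:ℂ)*q) + (w1:ℂ)*((t:ℂ)*b1 + (r:ℂ)*(w1:ℂ)*q) + (w2:ℂ)*((t:ℂ)*b2 + (r:ℂ)*(w2:ℂ)*q)) - (((t:ℂ)*p + ((r:ℂ)*(w0:ℂ)*a0 + (r:ℂ)*(w1:ℂ)*a1 + (r:ℂ)*(w2:ℂ)*a2)) - ((w0:ℂ)*((t:ℂ)*a0 + (r:ℂ)*(w0:ℂ)*p) + (w1:ℂ)*((t:ℂ)*a1 + (r:ℂ)*(w1:ℂ)*p) + (w2:ℂ)*((t:ℂ)*a2 + (r:ℂ)*(w2:ℂ)*p))) * ((w0:ℂ)*b0 + (w1:ℂ)*b1 + (w2:ℂ)*b2)))‖ + ‖(((r*(t+r)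 : ℝ):ℂ) * (((w0:ℂ)*a1 - (w1:ℂ)*a0)*((w0:ℂ)*b1 - (w1:ℂ)*b0) + ((w0:ℂ)*a2 - (w2:ℂ)*a0)*((w0:ℂ)*b2 - (w2:ℂ)*b0) + ((w1:ℂ)*a2 - (w2:ℂ)*a1)*((w1:ℂ)*b2 - (w2:ℂ)*b1)))‖ := by
          calc ‖(((r/2 : ℝ):ℂ) * ((((t:ℂ)*p + ((r:ℂ)*(w0:ℂ)*a0 + (r:ℂ)*(w1:ℂ)*a1 + (r:ℂ)*(w2:ℂ)*a2)) + ((w0:ℂ)*((t:ℂ)*a0 + (r:ℂ)*(w0:ℂ)*p) + (w1:ℂ)*((t:ℂ)*a1 + (r:ℂ)*(w1:ℂ)*p) + (w2:ℂ)*((t:ℂ)*a2 + (r:ℂ)*(w2:ℂ)*p))) * (q - ((w0:ℂ)*b0 + (w1:ℂ)*b1 + (w2:ℂ)*b2)))) + ((((t+r)/2 : ℝ):ℂ) * ((p - ((w0:ℂ)*a0 + (w1:ℂ)*a1 + (w2:ℂ)*a2)) * ((w0:ℂ)*((t:ℂ)*b0 + (r:ℂ)*(w0:ℂ)*q) + (w1:ℂ)*((t:ℂ)*b1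 + (r:ℂ)*(w1:ℂ)*q) + (w2:ℂ)*((t:ℂ)*b2 + (r:ℂ)*(w2:ℂ)*q)) - (((t:ℂ)*p + ((r:ℂ)*(w0:ℂ)*a0 + (r:ℂ)*(w1:ℂ)*a1 + (r:ℂ)*(w2:ℂ)*a2)) - ((w0:ℂ)*((t:ℂ)*a0 + (r:ℂ)*(w0:ℂ)*p) + (w1:ℂ)*((t:ℂ)*a1 + (r:ℂ)*(w1:ℂ)*p) + (w2:ℂ)*((t:ℂ)*a2 + (r:ℂ)*(w2:ℂ)*p))) * ((w0:ℂ)*b0 + (w1:ℂ)*b1 + (w2:ℂ)*b2))) - (((r*(t+r) : ℝ):ℂ) * (((w0:ℂ)*a1 - (w1:ℂ)*a0)*((w0:ℂ)*b1 - (w1:ℂ)*b0) + ((w0:ℂ)*a2 - (w2:ℂ)*a0)*((w0:ℂ)*b2 - (w2:ℂ)*b0) + ((w1:ℂ)*a2 - (w2:ℂ)*a1)*((w1:ℂ)*b2 - (w2:ℂ)*b1)))‖ ≤ ‖(((r/2 : ℝ):ℂ) * ((((t:ℂ)*p + ((r:ℂ)*(w0:ℂ)*a0 + (r:ℂ)*(w1:ℂ)*a1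 + (r:ℂ)*(w2:ℂ)*a2)) + ((w0:ℂ)*((t:ℂ)*a0 + (r:ℂ)*(w0:ℂ)*p) + (w1:ℂ)*((t:ℂ)*a1 + (r:ℂ)*(w1:ℂ)*p) + (w2:ℂ)*((t:ℂ)*a2 + (r:ℂ)*(w2:ℂ)*p))) * (q - ((w0:ℂ)*b0 + (w1:ℂ)*b1 + (w2:ℂ)*b2)))) + ((((t+r)/2 : ℝ):ℂ) * ((p - ((w0:ℂ)*a0 + (w1:ℂ)*a1 + (w2:ℂ)*a2)) * ((w0:ℂ)*((t:ℂ)*b0 + (r:ℂ)*(w0:ℂ)*q) + (w1:ℂ)*((t:ℂ)*b1 + (r:ℂ)*(w1:ℂ)*q) + (w2:ℂ)*((t:ℂ)*b2 + (r:ℂ)*(w2:ℂ)*q)) - (((t:ℂ)*p + ((r:ℂ)*(w0:ℂ)*a0 + (r:ℂ)*(w1:ℂ)*a1 + (r:ℂ)*(w2:ℂ)*a2)) - ((w0:ℂ)*((t:ℂ)*a0 + (r:ℂ)*(w0:ℂ)*p) + (w1:ℂ)*((t:ℂ)*a1 + (r:ℂ)*(w1:ℂ)*p) + (w2:ℂ)*((t:ℂ)*a2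 + (r:ℂ)*(w2:ℂ)*p))) * ((w0:ℂ)*b0 + (w1:ℂ)*b1 + (w2:ℂ)*b2)))‖ + ‖(((r*(t+r) : ℝ):ℂ) * (((w0:ℂ)*a1 - (w1:ℂ)*a0)*((w0:ℂ)*b1 - (w1:ℂ)*b0) + ((w0:ℂ)*a2 - (w2:ℂ)*a0)*((w0:ℂ)*b2 - (w2:ℂ)*b0) + ((w1:ℂ)*a2 - (w2:ℂ)*a1)*((w1:ℂ)*b2 - (w2:ℂ)*b1)))‖ := norm_sub_le _ _
            _ ≤ ‖(((r/2 : ℝ):ℂ) * ((((t:ℂ)*p + ((r:ℂ)*(w0:ℂ)*a0 + (r:ℂ)*(w1:ℂ)*a1 + (r:ℂ)*(w2:ℂ)*a2)) + ((w0:ℂ)*((t:ℂ)*a0 + (r:ℂ)*(w0:ℂ)*p) + (w1:ℂ)*((t:ℂ)*a1 + (r:ℂ)*(w1:ℂ)*p) + (w2:ℂ)*((t:ℂ)*a2 + (r:ℂ)*(w2:ℂ)*p))) * (q - ((w0:ℂ)*b0 + (w1:ℂ)*b1 + (w2:ℂ)*b2))))‖ + ‖((((t+r)/2 : ℝ):ℂ)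 * ((p - ((w0:ℂ)*a0 + (w1:ℂ)*a1 + (w2:ℂ)*a2)) * ((w0:ℂ)*((t:ℂ)*b0 + (r:ℂ)*(w0:ℂ)*q) + (w1:ℂ)*((t:ℂ)*b1 + (r:ℂ)*(w1:ℂ)*q) + (w2:ℂ)*((t:ℂ)*b2 + (r:ℂ)*(w2:ℂ)*q)) - (((t:ℂ)*p + ((r:ℂ)*(w0:ℂ)*a0 + (r:ℂ)*(w1:ℂ)*a1 + (r:ℂ)*(w2:ℂ)*a2)) - ((w0:ℂ)*((t:ℂ)*a0 + (r:ℂ)*(w0:ℂ)*p) + (w1:ℂ)*((t:ℂ)*a1 + (r:ℂ)*(w1:ℂ)*p) + (w2:ℂ)*((t:ℂ)*a2 + (r:ℂ)*(w2:ℂ)*p))) * ((w0:ℂ)*b0 + (w1:ℂ)*b1 + (w2:ℂ)*b2)))‖ + ‖(((r*(t+r) : ℝ):ℂ) * (((w0:ℂ)*a1 - (w1:ℂ)*a0)*((w0:ℂ)*b1 - (w1:ℂ)*b0) + ((w0:ℂ)*a2 - (w2:ℂ)*a0)*((w0:ℂ)*b2 - (w2:ℂ)*b0) + ((w1:ℂ)*a2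 - (w2:ℂ)*a1)*((w1:ℂ)*b2 - (w2:ℂ)*b1)))‖ := by linarith only [norm_add_le (((r/2 : ℝ):ℂ) * ((((t:ℂ)*p + ((r:ℂ)*(w0:ℂ)*a0 + (r:ℂ)*(w1:ℂ)*a1 + (r:ℂ)*(w2:ℂ)*a2)) + ((w0:ℂ)*((t:ℂ)*a0 + (r:ℂ)*(w0:ℂ)*p) + (w1:ℂ)*((t:ℂ)*a1 + (r:ℂ)*(w1:ℂ)*p) + (w2:ℂ)*((t:ℂ)*a2 + (r:ℂ)*(w2:ℂ)*p))) * (q - ((w0:ℂ)*b0 + (w1:ℂ)*b1 + (w2:ℂ)*b2)))) ((((t+r)/2 : ℝ):ℂ) * ((p - ((w0:ℂ)*a0 + (w1:ℂ)*a1 + (w2:ℂ)*a2)) * ((w0:ℂ)*((t:ℂ)*b0 + (r:ℂ)*(w0:ℂ)*q) + (w1:ℂ)*((t:ℂ)*b1 + (r:ℂ)*(w1:ℂ)*q) + (w2:ℂ)*((t:ℂ)*b2 + (r:ℂ)*(w2:ℂ)*q)) - (((t:ℂ)*p + ((r:ℂ)*(w0:ℂ)*a0 + (r:ℂ)*(w1:ℂ)*a1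 + (r:ℂ)*(w2:ℂ)*a2)) - ((w0:ℂ)*((t:ℂ)*a0 + (r:ℂ)*(w0:ℂ)*p) + (w1:ℂ)*((t:ℂ)*a1 + (r:ℂ)*(w1:ℂ)*p) + (w2:ℂ)*((t:ℂ)*a2 + (r:ℂ)*(w2:ℂ)*p))) * ((w0:ℂ)*b0 + (w1:ℂ)*b1 + (w2:ℂ)*b2))), norm_sub_le ((((r/2 : ℝ):ℂ) * ((((t:ℂ)*p + ((r:ℂ)*(w0:ℂ)*a0 + (r:ℂ)*(w1:ℂ)*a1 + (r:ℂ)*(w2:ℂ)*a2)) + ((w0:ℂ)*((t:ℂ)*a0 + (r:ℂ)*(w0:ℂ)*p) + (w1:ℂ)*((t:ℂ)*a1 + (r:ℂ)*(w1:ℂ)*p) + (w2:ℂ)*((t:ℂ)*a2 + (r:ℂ)*(w2:ℂ)*p))) * (q - ((w0:ℂ)*b0 + (w1:ℂ)*b1 + (w2:ℂ)*b2)))) + ((((t+r)/2 : ℝ):ℂ) * ((p - ((w0:ℂ)*a0 + (w1:ℂ)*a1 + (w2:ℂ)*a2)) * ((w0:ℂ)*((t:ℂ)*b0 + (r:ℂ)*(w0:ℂ)*q)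 + (w1:ℂ)*((t:ℂ)*b1 + (r:ℂ)*(w1:ℂ)*q) + (w2:ℂ)*((t:ℂ)*b2 + (r:ℂ)*(w2:ℂ)*q)) - (((t:ℂ)*p + ((r:ℂ)*(w0:ℂ)*a0 + (r:ℂ)*(w1:ℂ)*a1 + (r:ℂ)*(w2:ℂ)*a2)) - ((w0:ℂ)*((t:ℂ)*a0 + (r:ℂ)*(w0:ℂ)*p) + (w1:ℂ)*((t:ℂ)*a1 + (r:ℂ)*(w1:ℂ)*p) + (w2:ℂ)*((t:ℂ)*a2 + (r:ℂ)*(w2:ℂ)*p))) * ((w0:ℂ)*b0 + (w1:ℂ)*b1 + (w2:ℂ)*b2)))) (((r*(t+r) : ℝ):ℂ) * (((w0:ℂ)*a1 - (w1:ℂ)*a0)*((w0:ℂ)*b1 - (w1:ℂ)*b0) + ((w0:ℂ)*a2 - (w2:ℂ)*a0)*((w0:ℂ)*b2 - (w2:ℂ)*b0) + ((w1:ℂ)*a2 - (w2:ℂ)*a1)*((w1:ℂ)*b2 - (w2:ℂ)*b1)))]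
        have hbig : r*(t+r)*nq ≤ (r/2) * ((sf+3*gf) * (4*gg))
            + ((t+r)/2) * (4*gf*(3*gg) + (sf+3*gf)*(3*gg)) + 9*(gf*gg) := by
          rw [hGn]
          linarith only [htri, nT1, nT2, nT3]
        rw [abs_of_nonneg (by linarith only [hpos] : (0:ℝ) ≤ t+r)]
        have hEnn : (0:ℝ) ≤ (4*gf*(3*gg) + (sf+3*gf)*(3*gg)) := by nlinarith only [hgg2, hsg0]
        have stepa : ((t+r)/2) * (4*gf*(3*gg) + (sf+3*gf)*(3*gg)) ≤ ((3*r)/2) * (4*gf*(3*gg) + (sf+3*gf)*(3*gg)) :=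
          mul_le_mul_of_nonneg_right (by linarith only [hext] : (t+r)/2 ≤ (3*r)/2) hEnn
        have stepb : 9*(gf*gg) ≤ 27*(r*(gf*gg)) := by
          have h := mul_le_mul_of_nonneg_right (by linarith only [hpos, hext] : (1:ℝ) ≤ 3*r) hgg2
          linarith only [h]
        have stepc : (r/2) * ((sf+3*gf) * (4*gg)) + ((3*r)/2) * (4*gf*(3*gg) + (sf+3*gf)*(3*gg)) + 27*(r*(gf*gg))
            ≤ r*(500*((sf+gf)*gg)) := by
          nlinarith only [mul_nonneg (mul_nonneg hr hsf0) hgg0, mul_nonneg (mul_nonneg hr hgf0) hgg0]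
        have hcancel : r*((t+r)*nq) ≤ r*(500*((sf+gf)*gg)) := by nlinarith only [hbig, stepa, stepb, stepc]
        exact le_of_mul_le_mul_left hcancel hrpos
    · -- |t+r| ≤ 1
      have habs : |t+r| ≤ 1 := abs_le.2 (by constructor <;> linarith only [hgt, hlt])
      have h1 := mul_le_mul_of_nonneg_right habs hnq0
      linarith only [h1, hQ4, hsg0, hgg2]
  have hjb := jb_pos' (t+r)
  have hj : jb (t+r) * nq ≤ 1000 * ((sf+gf)*gg) := by
    have h1 : jb (t+r) * nq ≤ (1 + |t+r|) * nq :=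
      mul_le_mul_of_nonneg_right (jb_le' (t+r)) hnq0
    linarith only [h1, hmain, hQ4, hsg0, hgg2]
  calc nq = (jb (t+r))⁻¹ * (jb (t+r) * nq) := by field_simp
    _ ≤ (jb (t+r))⁻¹ * (1000*((sf+gf)*gg)) :=
        mul_le_mul_of_nonneg_left hj (by positivity)
    _ = 1000 * (jb (t + r))⁻¹ * ((sf + gf) * gg) := by ring

lemma comp10' (m0 m1 m2 m3 m4 m5 m6 m7 m8 m9 : ℂ) :
    (‖m0‖ ≤ Real.sqrt (‖m0‖^2 + (‖m1‖^2 + ‖m2‖^2 + ‖m3‖^2) + (‖m4‖^2 + ‖m5‖^2 + ‖m6‖^2) + (‖m7‖^2 + ‖m8‖^2 + ‖m9‖^2))) ∧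
    (‖m1‖ ≤ Real.sqrt (‖m0‖^2 + (‖m1‖^2 + ‖m2‖^2 + ‖m3‖^2) + (‖m4‖^2 + ‖m5‖^2 + ‖m6‖^2) + (‖m7‖^2 + ‖m8‖^2 + ‖m9‖^2))) ∧
    (‖m2‖ ≤ Real.sqrt (‖m0‖^2 + (‖m1‖^2 + ‖m2‖^2 + ‖m3‖^2) + (‖m4‖^2 + ‖m5‖^2 + ‖m6‖^2) + (‖m7‖^2 + ‖m8‖^2 + ‖m9‖^2))) ∧
    (‖m3‖ ≤ Real.sqrt (‖m0‖^2 + (‖m1‖^2 + ‖m2‖^2 + ‖m3‖^2) + (‖m4‖^2 + ‖m5‖^2 + ‖m6‖^2) + (‖m7‖^2 + ‖m8‖^2 + ‖m9‖^2))) ∧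
    (‖m4‖ ≤ Real.sqrt (‖m0‖^2 + (‖m1‖^2 + ‖m2‖^2 + ‖m3‖^2) + (‖m4‖^2 + ‖m5‖^2 + ‖m6‖^2) + (‖m7‖^2 + ‖m8‖^2 + ‖m9‖^2))) ∧
    (‖m5‖ ≤ Real.sqrt (‖m0‖^2 + (‖m1‖^2 + ‖m2‖^2 + ‖m3‖^2) + (‖m4‖^2 + ‖m5‖^2 + ‖m6‖^2) + (‖m7‖^2 + ‖m8‖^2 + ‖m9‖^2))) ∧
    (‖m6‖ ≤ Real.sqrt (‖m0‖^2 + (‖m1‖^2 + ‖m2‖^2 + ‖m3‖^2) + (‖m4‖^2 + ‖m5‖^2 + ‖m6‖^2) + (‖m7‖^2 + ‖m8‖^2 + ‖m9‖^2))) ∧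
    (‖m7‖ ≤ Real.sqrt (‖m0‖^2 + (‖m1‖^2 + ‖m2‖^2 + ‖m3‖^2) + (‖m4‖^2 + ‖m5‖^2 + ‖m6‖^2) + (‖m7‖^2 + ‖m8‖^2 + ‖m9‖^2))) ∧
    (‖m8‖ ≤ Real.sqrt (‖m0‖^2 + (‖m1‖^2 + ‖m2‖^2 + ‖m3‖^2) + (‖m4‖^2 + ‖m5‖^2 + ‖m6‖^2) + (‖m7‖^2 + ‖m8‖^2 + ‖m9‖^2))) ∧
    (‖m9‖ ≤ Real.sqrt (‖m0‖^2 + (‖m1‖^2 + ‖m2‖^2 + ‖m3‖^2) + (‖m4‖^2 + ‖m5‖^2 + ‖m6‖^2) + (‖m7‖^2 + ‖m8‖^2 + ‖m9‖^2))) := by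
  refine ⟨?_, ?_, ?_, ?_, ?_, ?_, ?_, ?_, ?_, ?_⟩ <;>
    exact le_sqrt_of_sq_le' (by linarith only [(sq_nonneg ‖m0‖), (sq_nonneg ‖m1‖), (sq_nonneg ‖m2‖),
      (sq_nonneg ‖m3‖), (sq_nonneg ‖m4‖), (sq_nonneg ‖m5‖), (sq_nonneg ‖m6‖), (sq_nonneg ‖m7‖),
      (sq_nonneg ‖m8‖), (sq_nonneg ‖m9‖)]) (norm_nonneg _)

/-- null form estimate
`|Q₀(f,g)| ≤ C ⟨t+r⟩⁻¹ (|L₀f| + |Γf|) |Γg|`. -/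
theorem stmt_7 :
    ∃ C : ℝ, 0 < C ∧
      ∀ f g : ℝ → Sp → ℂ, Smth f → Smth g → ∀ t (x : Sp),
        ‖Q0C f g t x‖ ≤
          C * (jb (t + ‖x‖))⁻¹ * ((‖scalE f t x‖ + GammaNormC f t x) * GammaNormC g t x) := by
  refine ⟨1000, by norm_num, ?_⟩
  intro f g _ _ t x
  have hr2 : ‖x‖^2 = (x 0)^2 + (x 1)^2 + (x 2)^2 := by
    rw [EuclideanSpace.norm_eq, Real.sq_sqrt (by positivity)]
    simp [Fin.sum_univ_three, sq_abs]
  obtain ⟨hf0, hf1, hf2, hf3, hf4, hf5, hf6, hf7, hf8, hf9⟩ := comp10' (ptE f t x) (pxE 0 f t x) (pxE 1 f t x) (pxE 2 f t x) (((x 0 : ℝ):ℂ)*(pxE 1 f t x) - ((x 1 : ℝ):ℂ)*(pxE 0 f t x)) (((x 0 : ℝ):ℂ)*(pxE 2 f t x) - ((x 2 : ℝ):ℂ)*(pxE 0 f t x)) (((x 1 : ℝ):ℂ)*(pxE 2 f t x) - ((x 2 : ℝ):ℂ)*(pxE 1 f t x)) (((t : ℝ):ℂ)*(pxE 0 f t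 x) + ((x 0 : ℝ):ℂ)*(ptE f t x)) (((t : ℝ):ℂ)*(pxE 1 f t x) + ((x 1 : ℝ):ℂ)*(ptE f t x)) (((t : ℝ):ℂ)*(pxE 2 f t x) + ((x 2 : ℝ):ℂ)*(ptE f t x))
  obtain ⟨hg0, hg1, hg2, hg3, hg4, hg5, hg6, hg7, hg8, hg9⟩ := comp10' (ptE g t x) (pxE 0 g t x) (pxE 1 g t x) (pxE 2 g t x) (((x 0 : ℝ):ℂ)*(pxE 1 g t x) - ((x 1 : ℝ):ℂ)*(pxE 0 g t x)) (((x 0 : ℝ):ℂ)*(pxE 2 g t x) - ((x 2 : ℝ):ℂ)*(pxE 0 g t x)) (((x 1 : ℝ):ℂ)*(pxE 2 g t x) - ((x 2 : ℝ):ℂ)*(pxE 1 g t x)) (((t : ℝ):ℂ)*(pxE 0 g t x) + ((x 0 : ℝ):ℂ)*(ptE g t x)) (((t : ℝ):ℂ)*(pxE 1 g t x) + ((x 1 : ℝ):ℂ)*(ptE g t x)) (((t : ℝ):ℂ)*(pxE 2 g t x) + ((x 2 : ℝ):ℂ)*(ptE g t x))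
  simp only [Q0C, GammaNormC, scalE, rotE, boostE, Fin.sum_univ_three, Complex.real_smul]
  exact key t (x 0) (x 1) (x 2) ‖x‖ _ _ _ _ _ _ _ _ _ _ _ (norm_nonneg x) hr2 rfl
    (Real.sqrt_nonneg _) (Real.sqrt_nonneg _)
    hf0 hf1 hf2 hf3 hf7 hf8 hf9 hf4 hf5 hf6
    hg0 hg1 hg2 hg3 hg7 hg8 hg9 hg4 hg5 hg6
end
end

section
/- Extra decay for the Hessian of a wave: if u is smooth and −□u = G on ℝ^{1+3}, then for all (t,x) with r = |x| ≤ 2t one has |∂∂u| ≤ C( (t/⟨t−r⟩)|G| + (1/⟨t−r⟩) Σ_{|J|≤1} |∂Γ^J u| ), where ∂∂u denotes the full collection of second derivatives ∂_α∂_β u, and the sum is over at most one application of a Klainerman vector field Γ. -/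
noncomputable section

open MeasureTheory Matrix

/- ============ auxiliary machinery for stmt_10 ============ -/
namespace Stmt10

def Dw (w : ℝ × Sp) (f : ℝ × Sp → ℝ) : ℝ × Sp → ℝ := fun p => fderiv ℝ f p w
def e0 : ℝ × Sp := (1, 0)
def ee (i : Fin 3) : ℝ × Sp := (0, EuclideanSpace.single i 1)

lemma Dw_contDiff {f : ℝ × Sp → ℝ} (hf : ContDiff ℝ (⊤ : ℕ∞) f) (w : ℝ × Sp) :
    ContDiff ℝ (⊤ : ℕ∞) (Dw w f) :=
  (hf.fderiv_right (by simp)).clm_apply contDiff_const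

lemma ptE_eq {f : ℝ × Sp → ℝ} (hf : ContDiff ℝ (⊤ : ℕ∞) f) (t : ℝ) (x : Sp) :
    ptE (fun a b => f (a, b)) t x = Dw e0 f (t, x) := by
  have h1 : HasFDerivAt f (fderiv ℝ f (t, x)) (t, x) :=
    (hf.differentiable (by simp) (t, x)).hasFDerivAt
  have h2 : HasDerivAt (fun s : ℝ => (s, x)) ((1 : ℝ), (0 : Sp)) t :=
    (hasDerivAt_id t).prodMk (hasDerivAt_const t x)
  exact (h1.comp_hasDerivAt t h2).deriv

lemma pxE_eq {f : ℝ × Sp → ℝ} (hf : ContDiff ℝ (⊤ : ℕ∞) f) (i : Fin 3) (t : ℝ) (x : Sp) :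
    pxE i (fun a b => f (a, b)) t x = Dw (ee i) f (t, x) := by
  have h1 : HasFDerivAt f (fderiv ℝ f (t, x)) (t, x) :=
    (hf.differentiable (by simp) (t, x)).hasFDerivAt
  have h2 : HasFDerivAt (fun y : Sp => (t, y)) (ContinuousLinearMap.inr ℝ ℝ Sp) x :=
    (hasFDerivAt_const t x).prodMk (hasFDerivAt_id x)
  have h3 : HasFDerivAt (fun y => f (t, y))
      ((fderiv ℝ f (t, x)).comp (ContinuousLinearMap.inr ℝ ℝ Sp)) x := h1.comp x h2
  show fderiv ℝ (fun y => f (t, y)) x (EuclideanSpace.single i 1) = _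
  rw [h3.fderiv]; rfl

lemma Dw_comm {f : ℝ × Sp → ℝ} (hf : ContDiff ℝ (⊤ : ℕ∞) f) (w w' p : ℝ × Sp) :
    Dw w (Dw w' f) p = Dw w' (Dw w f) p := by
  have hd : Differentiable ℝ (fderiv ℝ f) :=
    (hf.fderiv_right (m := (⊤ : ℕ∞)) (by simp)).differentiable (by simp)
  have hsym : ∀ a b, fderiv ℝ (fderiv ℝ f) p a b = fderiv ℝ (fderiv ℝ f) p b a :=
    second_derivative_symmetric (fun y => ((hf.differentiable (by simp)) y).hasFDerivAt)
      (hd p).hasFDerivAt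
  have key : ∀ w'' : ℝ × Sp, fderiv ℝ (Dw w'' f) p
      = (fderiv ℝ (fderiv ℝ f) p).flip w'' := by
    intro w''
    have h0 : Dw w'' f = ⇑(ContinuousLinearMap.apply ℝ ℝ w'') ∘ fderiv ℝ f := rfl
    rw [h0, fderiv_comp _ (ContinuousLinearMap.apply ℝ ℝ w'').differentiableAt (hd p)]
    ext v <;> simp [ContinuousLinearMap.fderiv]
  show fderiv ℝ (Dw w' f) p w = fderiv ℝ (Dw w f) p w'
  rw [key w', key w]
  simp only [ContinuousLinearMap.flip_apply]
  exact hsym w w'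

lemma coord_contDiff (a : Fin 3) : ContDiff ℝ (⊤ : WithTop ℕ∞) (fun q : ℝ × Sp => q.2 a) :=
  ((EuclideanSpace.proj a).comp (ContinuousLinearMap.snd ℝ ℝ Sp)).contDiff

lemma Dw_prod {g h : ℝ × Sp → ℝ} (hg : ContDiff ℝ (⊤ : ℕ∞) g) (hh : ContDiff ℝ (⊤ : ℕ∞) h)
    (a : Fin 3) (w p : ℝ × Sp) :
    Dw w (fun q => q.1 * g q + q.2 a * h q) p
      = p.1 * Dw w g p + w.1 * g p + p.2 a * Dw w h p + w.2 a * h p := by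
  have c1 : HasFDerivAt (fun q : ℝ × Sp => q.1) (ContinuousLinearMap.fst ℝ ℝ Sp) p :=
    hasFDerivAt_fst
  have c2 : HasFDerivAt (fun q : ℝ × Sp => q.2 a)
      ((EuclideanSpace.proj a).comp (ContinuousLinearMap.snd ℝ ℝ Sp)) p :=
    ((EuclideanSpace.proj a).comp (ContinuousLinearMap.snd ℝ ℝ Sp)).hasFDerivAt
  have hg' : HasFDerivAt g (fderiv ℝ g p) p :=
    (hg.differentiable (by simp) p).hasFDerivAt
  have hh' : HasFDerivAt h (fderiv ℝ h p) p :=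
    (hh.differentiable (by simp) p).hasFDerivAt
  have H : fderiv ℝ (fun q : ℝ × Sp => q.1 * g q + q.2 a * h q) p = _ := ((c1.mul hg').add (c2.mul hh')).fderiv
  show fderiv ℝ _ p w = _
  rw [H]
  simp only [ContinuousLinearMap.add_apply, ContinuousLinearMap.smul_apply,
    ContinuousLinearMap.coe_comp', Function.comp_apply, ContinuousLinearMap.coe_fst',
    ContinuousLinearMap.coe_snd', smul_eq_mul]
  show p.1 * Dw w g p + g p * w.1 + (p.2 a * Dw w h p + h p * w.2 a) = _
  ring


lemma e0_1 : e0.1 = 1 := rfl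
lemma e0_2 (a : Fin 3) : e0.2 a = 0 := rfl
lemma ee_1 (i : Fin 3) : (ee i).1 = 0 := rfl
lemma ee_2 (i a : Fin 3) : (ee i).2 a = if a = i then 1 else 0 := by
  simp [ee, EuclideanSpace.single_apply]

/- ---------- norm component lemmas ---------- -/

lemma abs_ptE_le (w : ℝ → Sp → ℝ) (t : ℝ) (x : Sp) : |ptE w t x| ≤ DNormR w t x := by
  unfold DNormR
  rw [← Real.sqrt_sq_eq_abs]
  apply Real.sqrt_le_sqrt
  have : (0:ℝ) ≤ ∑ i : Fin 3, (pxE i w t x) ^ 2 :=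
    Finset.sum_nonneg fun i _ => sq_nonneg _
  linarith

lemma abs_pxE_le (i : Fin 3) (w : ℝ → Sp → ℝ) (t : ℝ) (x : Sp) :
    |pxE i w t x| ≤ DNormR w t x := by
  unfold DNormR
  rw [← Real.sqrt_sq_eq_abs]
  apply Real.sqrt_le_sqrt
  have h : pxE i w t x ^ 2 ≤ ∑ j : Fin 3, pxE j w t x ^ 2 := by
    simpa using Finset.single_le_sum (f := fun j => (pxE j w t x) ^ 2)
      (fun j _ => sq_nonneg _) (Finset.mem_univ i)
  nlinarith [sq_nonneg (ptE w t x)]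

lemma DNormR_nonneg (w : ℝ → Sp → ℝ) (t : ℝ) (x : Sp) : 0 ≤ DNormR w t x :=
  Real.sqrt_nonneg _

lemma GF_le_DGam1 (u : ℝ → Sp → ℝ) (t : ℝ) (x : Sp) (k : Fin 10) :
    DNormR (GF k u) t x ≤ DGam1 u t x := by
  unfold DGam1
  have h := Finset.single_le_sum (f := fun k : Fin 10 => DNormR (GF k u) t x)
    (fun j _ => DNormR_nonneg _ _ _) (Finset.mem_univ k)
  have := DNormR_nonneg u t x
  linarith

lemma base_le_DGam1 (u : ℝ → Sp → ℝ) (t : ℝ) (x : Sp) :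
    DNormR u t x ≤ DGam1 u t x := by
  unfold DGam1
  have : (0:ℝ) ≤ ∑ k : Fin 10, DNormR (GF k u) t x :=
    Finset.sum_nonneg fun k _ => DNormR_nonneg _ _ _
  linarith

lemma DGam1_nonneg (u : ℝ → Sp → ℝ) (t : ℝ) (x : Sp) : 0 ≤ DGam1 u t x :=
  le_trans (DNormR_nonneg u t x) (base_le_DGam1 u t x)

lemma coord_le_norm (x : Sp) (a : Fin 3) : |x a| ≤ ‖x‖ := by
  rw [EuclideanSpace.norm_eq, ← Real.sqrt_sq_eq_abs]
  apply Real.sqrt_le_sqrt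
  have h := Finset.single_le_sum (f := fun i => ‖x i‖ ^ 2)
    (fun i _ => sq_nonneg _) (Finset.mem_univ a)
  simpa [Real.norm_eq_abs, sq_abs] using h

lemma sq_norm (x : Sp) : ‖x‖ ^ 2 = x 0 ^ 2 + x 1 ^ 2 + x 2 ^ 2 := by
  rw [EuclideanSpace.norm_eq, Real.sq_sqrt (Finset.sum_nonneg fun i _ => sq_nonneg _),
    Fin.sum_univ_three]
  simp [Real.norm_eq_abs, sq_abs]

/- ---------- jb lemmas ---------- -/

lemma one_le_jb (s : ℝ) : 1 ≤ jb s := by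
  unfold jb
  calc (1:ℝ) = Real.sqrt 1 := by simp
    _ ≤ Real.sqrt (1 + s ^ 2) := Real.sqrt_le_sqrt (by nlinarith [sq_nonneg s])

lemma jb_pos (s : ℝ) : 0 < jb s := lt_of_lt_of_le one_pos (one_le_jb s)

lemma jb_sq (s : ℝ) : (jb s) ^ 2 = 1 + s ^ 2 := by
  unfold jb; exact Real.sq_sqrt (by positivity)

/- ---------- pure real arithmetic lemmas ---------- -/

lemma abs5 (a b c d e : ℝ) : |a + b + c + d - e| ≤ |a| + |b| + |c| + |d| + |e| := by
  have h1 : |a + b + c + d - e| ≤ |a + b + c + d| + |e| := by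
    simpa [sub_eq_add_neg] using abs_add_le (a + b + c + d) (-e)
  have h2 := abs_add_le (a + b + c) d
  have h3 := abs_add_le (a + b) c
  have h4 := abs_add_le a b
  linarith

lemma abs3 (a b c : ℝ) : |a - b - c| ≤ |a| + |b| + |c| := by
  have h1 : |a - b - c| ≤ |a - b| + |c| := by
    simpa [sub_eq_add_neg] using abs_add_le (a - b) (-c)
  have h2 : |a - b| ≤ |a| + |b| := by
    simpa [sub_eq_add_neg] using abs_add_le a (-b)
  linarith

lemma abs3' (a b c : ℝ) : |a - b + c| ≤ |a| + |b| + |c| := by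
  have h1 := abs_add_le (a - b) c
  have h2 : |a - b| ≤ |a| + |b| := by
    simpa [sub_eq_add_neg] using abs_add_le a (-b)
  linarith

lemma boundA {t r J D g A X0 X1 X2 Y0 Y1 Y2 P0 P1 P2 Q Gv c0 c1 c2 : ℝ}
    (ht : 9 ≤ t) (hJ : 0 < J)
    (hD : 0 ≤ D) (hg : 0 ≤ g)
    (hid : (t ^ 2 - r ^ 2) * A =
      t ^ 2 * Gv + (t * X0 - c0 * Y0 + c0 * P0) + (t * X1 - c1 * Y1 + c1 * P1)
        + (t * X2 - c2 * Y2 + c2 * P2) - 3 * t * Q)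
    (hGv : |Gv| ≤ g)
    (hX0 : |X0| ≤ D) (hX1 : |X1| ≤ D) (hX2 : |X2| ≤ D)
    (hY0 : |Y0| ≤ D) (hY1 : |Y1| ≤ D) (hY2 : |Y2| ≤ D)
    (hP0 : |P0| ≤ D) (hP1 : |P1| ≤ D) (hP2 : |P2| ≤ D)
    (hQ : |Q| ≤ D)
    (hc0 : |c0| ≤ 2 * t) (hc1 : |c1| ≤ 2 * t) (hc2 : |c2| ≤ 2 * t)
    (hden : t * J ≤ 2 * |t ^ 2 - r ^ 2|) :
    J * |A| ≤ 2 * t * g + 36 * D := by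
  have ht0 : (0:ℝ) < t := by linarith
  have habs : |(t ^ 2 - r ^ 2) * A| ≤ t ^ 2 * g + 18 * t * D := by
    rw [hid]
    have hS : ∀ c X Y P : ℝ, |c| ≤ 2 * t → |X| ≤ D → |Y| ≤ D → |P| ≤ D →
        |t * X - c * Y + c * P| ≤ 5 * (t * D) := by
      intro c X Y P hc hX hY hP
      have h1 : |t * X| ≤ t * D := by
        rw [abs_mul, abs_of_pos ht0]
        exact mul_le_mul_of_nonneg_left hX ht0.le
      have h2 : |c * Y| ≤ 2 * t * D := by
        rw [abs_mul]
        exact mul_le_mul hc hY (abs_nonneg _) (by linarith)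
      have h3 : |c * P| ≤ 2 * t * D := by
        rw [abs_mul]
        exact mul_le_mul hc hP (abs_nonneg _) (by linarith)
      calc |t * X - c * Y + c * P| ≤ |t * X| + |c * Y| + |c * P| := abs3' _ _ _
        _ ≤ 5 * (t * D) := by linarith
    have h0 := hS c0 X0 Y0 P0 hc0 hX0 hY0 hP0
    have h1 := hS c1 X1 Y1 P1 hc1 hX1 hY1 hP1
    have h2 := hS c2 X2 Y2 P2 hc2 hX2 hY2 hP2
    have hT : |t ^ 2 * Gv| ≤ t ^ 2 * g := by
      rw [abs_mul, abs_of_pos (by positivity : (0:ℝ) < t ^ 2)]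
      exact mul_le_mul_of_nonneg_left hGv (by positivity)
    have hQ' : |3 * t * Q| ≤ 3 * t * D := by
      rw [abs_mul, abs_of_pos (by linarith : (0:ℝ) < 3 * t)]
      exact mul_le_mul_of_nonneg_left hQ (by linarith)
    calc |t ^ 2 * Gv + (t * X0 - c0 * Y0 + c0 * P0) + (t * X1 - c1 * Y1 + c1 * P1)
          + (t * X2 - c2 * Y2 + c2 * P2) - 3 * t * Q|
        ≤ |t ^ 2 * Gv| + |t * X0 - c0 * Y0 + c0 * P0| + |t * X1 - c1 * Y1 + c1 * P1|
          + |t * X2 - c2 * Y2 + c2 * P2| + |3 * t * Q| := abs5 _ _ _ _ _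
      _ ≤ t ^ 2 * g + 18 * t * D := by linarith
  have hchain : t * (J * |A|) ≤ t * (2 * t * g + 36 * D) := by
    calc t * (J * |A|) = (t * J) * |A| := by ring
      _ ≤ (2 * |t ^ 2 - r ^ 2|) * |A| := mul_le_mul_of_nonneg_right hden (abs_nonneg _)
      _ = 2 * |(t ^ 2 - r ^ 2) * A| := by rw [abs_mul]; ring
      _ ≤ 2 * (t ^ 2 * g + 18 * t * D) := by linarith
      _ = t * (2 * t * g + 36 * D) := by ring
  exact le_of_mul_le_mul_left hchain ht0

lemma boundN {t J D g Y P c Nv Av : ℝ}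
    (ht : 9 ≤ t) (hJ : 0 < J) (hJle : J ≤ 2 * t) (hD : 0 ≤ D) (hg : 0 ≤ g)
    (hid : t * Nv = Y - P - c * Av)
    (hY : |Y| ≤ D) (hP : |P| ≤ D) (hc : |c| ≤ 2 * t)
    (hA : J * |Av| ≤ 2 * t * g + 36 * D) :
    J * |Nv| ≤ 4 * t * g + 76 * D := by
  have ht0 : (0:ℝ) < t := by linarith
  have h1 : t * |Nv| ≤ 2 * D + 2 * t * |Av| := by
    have : |t * Nv| ≤ D + D + 2 * t * |Av| := by
      rw [hid]
      have h3 : |c * Av| ≤ 2 * t * |Av| := by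
        rw [abs_mul]
        exact mul_le_mul_of_nonneg_right hc (abs_nonneg _)
      calc |Y - P - c * Av| ≤ |Y| + |P| + |c * Av| := abs3 _ _ _
        _ ≤ D + D + 2 * t * |Av| := by linarith
    rw [abs_mul, abs_of_pos ht0] at this
    linarith
  have hchain : t * (J * |Nv|) ≤ t * (4 * t * g + 76 * D) := by
    calc t * (J * |Nv|) = J * (t * |Nv|) := by ring
      _ ≤ J * (2 * D + 2 * t * |Av|) :=
          mul_le_mul_of_nonneg_left h1 hJ.le
      _ = 2 * D * J + 2 * t * (J * |Av|) := by ring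
      _ ≤ 2 * D * (2 * t) + 2 * t * (2 * t * g + 36 * D) := by
          have e1 : 2 * D * J ≤ 2 * D * (2 * t) :=
            mul_le_mul_of_nonneg_left hJle (by linarith)
          have e2 : 2 * t * (J * |Av|) ≤ 2 * t * (2 * t * g + 36 * D) :=
            mul_le_mul_of_nonneg_left hA (by linarith)
          linarith
      _ = t * (4 * t * g + 76 * D) := by ring
  exact le_of_mul_le_mul_left hchain ht0

lemma boundM {t J D g X P c Mv Nv : ℝ}
    (ht : 9 ≤ t) (hJ : 0 < J) (hJle : J ≤ 2 * t) (hD : 0 ≤ D) (hg : 0 ≤ g)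
    (hid : t * Mv = X - c * Nv - P)
    (hX : |X| ≤ D) (hP : |P| ≤ D) (hc : |c| ≤ 2 * t)
    (hN : J * |Nv| ≤ 4 * t * g + 76 * D) :
    J * |Mv| ≤ 8 * t * g + 156 * D := by
  have ht0 : (0:ℝ) < t := by linarith
  have h1 : t * |Mv| ≤ 2 * D + 2 * t * |Nv| := by
    have : |t * Mv| ≤ D + 2 * t * |Nv| + D := by
      rw [hid]
      have h3 : |c * Nv| ≤ 2 * t * |Nv| := by
        rw [abs_mul]
        exact mul_le_mul_of_nonneg_right hc (abs_nonneg _)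
      calc |X - c * Nv - P| ≤ |X| + |c * Nv| + |P| := abs3 _ _ _
        _ ≤ D + 2 * t * |Nv| + D := by linarith
    rw [abs_mul, abs_of_pos ht0] at this
    linarith
  have hchain : t * (J * |Mv|) ≤ t * (8 * t * g + 156 * D) := by
    calc t * (J * |Mv|) = J * (t * |Mv|) := by ring
      _ ≤ J * (2 * D + 2 * t * |Nv|) := mul_le_mul_of_nonneg_left h1 hJ.le
      _ = 2 * D * J + 2 * t * (J * |Nv|) := by ring
      _ ≤ 2 * D * (2 * t) + 2 * t * (4 * t * g + 76 * D) := by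
          have e1 : 2 * D * J ≤ 2 * D * (2 * t) :=
            mul_le_mul_of_nonneg_left hJle (by linarith)
          have e2 : 2 * t * (J * |Nv|) ≤ 2 * t * (4 * t * g + 76 * D) :=
            mul_le_mul_of_nonneg_left hN (by linarith)
          linarith
      _ = t * (8 * t * g + 156 * D) := by ring
  exact le_of_mul_le_mul_left hchain ht0

lemma finalize {J t g D Z : ℝ} (hJ : 0 < J)
    (h : J * |Z| ≤ 200 * (t * g) + 200 * D) :
    |Z| ≤ 200 * ((t / J) * g + J⁻¹ * D) := by
  have heq : 200 * ((t / J) * g + J⁻¹ * D) = (200 * (t * g) + 200 * D) / J := by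
    field_simp
  rw [heq, le_div_iff₀ hJ]
  calc |Z| * J = J * |Z| := by ring
    _ ≤ 200 * (t * g) + 200 * D := h

end Stmt10

open Stmt10 in
set_option maxHeartbeats 1000000 in
/-- extra decay for the Hessian of a wave, in the region `r ≤ 2t`. -/
theorem stmt_10 :
    ∃ C : ℝ, 0 < C ∧
      ∀ u G : ℝ → Sp → ℝ, Smth u → Smth G →
        (∀ t x, negBox u t x = G t x) →
        ∀ t (x : Sp), ‖x‖ ≤ 2 * t → ∀ α β : Fin 4,
          |pd4 α (pd4 β u) t x| ≤
            C * ((t / jb (t - ‖x‖)) * |G t x| + (jb (t - ‖x‖))⁻¹ * DGam1 u t x) := by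
  refine ⟨200, by norm_num, ?_⟩
  intro u G hu hG hw t x hrt α β
  have hf : ContDiff ℝ (⊤ : ℕ∞) (fun p : ℝ × Sp => u p.1 p.2) := hu
  set f : ℝ × Sp → ℝ := fun p => u p.1 p.2 with hfdef
  -- first-order translations
  have hpt : ∀ a b, ptE u a b = Dw e0 f (a, b) := fun a b => ptE_eq hf a b
  have hptf : ptE u = fun a b => Dw e0 f (a, b) :=
    funext fun a => funext fun b => hpt a b
  have hpx : ∀ i a b, pxE i u a b = Dw (ee i) f (a, b) := fun i a b => pxE_eq hf i a b
  have hpxf : ∀ i, pxE i u = fun a b => Dw (ee i) f (a, b) :=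
    fun i => funext fun a => funext fun b => hpx i a b
  have hsm : ∀ w, ContDiff ℝ (⊤ : ℕ∞) (Dw w f) := Dw_contDiff hf
  -- second-order translations
  have h00 : ptE (ptE u) t x = Dw e0 (Dw e0 f) (t, x) := by
    rw [hptf]; exact ptE_eq (hsm e0) t x
  have h0i : ∀ i, pxE i (ptE u) t x = Dw (ee i) (Dw e0 f) (t, x) := by
    intro i; rw [hptf]; exact pxE_eq (hsm e0) i t x
  have hi0 : ∀ i, ptE (pxE i u) t x = Dw (ee i) (Dw e0 f) (t, x) := by
    intro i; rw [hpxf i, ptE_eq (hsm (ee i)) t x]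
    exact Dw_comm hf e0 (ee i) (t, x)
  have hij : ∀ i j, pxE i (pxE j u) t x = Dw (ee i) (Dw (ee j) f) (t, x) := by
    intro i j; rw [hpxf j]; exact pxE_eq (hsm (ee j)) i t x
  -- boosts
  have hboostf : ∀ a : Fin 3, boostE a u =
      fun a' b' => (fun q : ℝ × Sp => q.1 * Dw (ee a) f q + q.2 a * Dw e0 f q) (a', b') := by
    intro a; funext a' b'
    show a' • pxE a u a' b' + b' a • ptE u a' b'
        = a' * Dw (ee a) f (a', b') + b' a * Dw e0 f (a', b')
    rw [hpx a a' b', hpt a' b', smul_eq_mul, smul_eq_mul]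
  have hBsm : ∀ a : Fin 3,
      ContDiff ℝ (⊤ : ℕ∞) (fun q : ℝ × Sp => q.1 * Dw (ee a) f q + q.2 a * Dw e0 f q) :=
    fun a => (contDiff_fst.mul (hsm _)).add ((((coord_contDiff a).of_le le_top : ContDiff ℝ (⊤ : ℕ∞) (fun q : ℝ × Sp => q.2 a))).mul (hsm _))
  have hY : ∀ a : Fin 3, ptE (boostE a u) t x
      = t * Dw (ee a) (Dw e0 f) (t, x) + Dw (ee a) f (t, x)
        + x a * Dw e0 (Dw e0 f) (t, x) := by
    intro a
    rw [hboostf a, ptE_eq (hBsm a) t x, Dw_prod (hsm (ee a)) (hsm e0) a e0 (t, x),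
      Dw_comm hf e0 (ee a) (t, x)]
    dsimp only
    rw [e0_1, e0_2]
    ring
  have hX : ∀ b a : Fin 3, pxE b (boostE a u) t x
      = t * Dw (ee b) (Dw (ee a) f) (t, x) + x a * Dw (ee b) (Dw e0 f) (t, x)
        + (if a = b then Dw e0 f (t, x) else 0) := by
    intro b a
    rw [hboostf a, pxE_eq (hBsm a) b t x, Dw_prod (hsm (ee a)) (hsm e0) a (ee b) (t, x),
      ee_1, ee_2]
    dsimp only
    split_ifs <;> ring
  -- wave equation
  have hwave : Dw e0 (Dw e0 f) (t, x)
      = Dw (ee 0) (Dw (ee 0) f) (t, x) + Dw (ee 1) (Dw (ee 1) f) (t, x)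
        + Dw (ee 2) (Dw (ee 2) f) (t, x) + G t x := by
    have h := hw t x
    unfold negBox lapE at h
    rw [Fin.sum_univ_three] at h
    rw [h00, hij 0 0, hij 1 1, hij 2 2] at h
    linarith
  -- numeric preliminaries
  have hr0 : (0:ℝ) ≤ ‖x‖ := norm_nonneg x
  have ht0 : (0:ℝ) ≤ t := by linarith
  have hg : (0:ℝ) ≤ |G t x| := abs_nonneg _
  have hD : (0:ℝ) ≤ DGam1 u t x := DGam1_nonneg u t x
  have hJ0 : 0 < jb (t - ‖x‖) := jb_pos _
  have hJsq := jb_sq (t - ‖x‖)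
  -- first-derivative bounds
  have hP0 : |Dw e0 f (t, x)| ≤ DGam1 u t x := by
    rw [← hpt t x]; exact (abs_ptE_le u t x).trans (base_le_DGam1 u t x)
  have hPa : ∀ a, |Dw (ee a) f (t, x)| ≤ DGam1 u t x := by
    intro a; rw [← hpx a t x]; exact (abs_pxE_le a u t x).trans (base_le_DGam1 u t x)
  have hYb : ∀ a : Fin 3, |ptE (boostE a u) t x| ≤ DGam1 u t x := by
    intro a
    refine (abs_ptE_le _ t x).trans ?_
    fin_cases a
    · exact GF_le_DGam1 u t x 7
    · exact GF_le_DGam1 u t x 8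
    · exact GF_le_DGam1 u t x 9
  have hXb : ∀ b a : Fin 3, |pxE b (boostE a u) t x| ≤ DGam1 u t x := by
    intro b a
    refine (abs_pxE_le b _ t x).trans ?_
    fin_cases a
    · exact GF_le_DGam1 u t x 7
    · exact GF_le_DGam1 u t x 8
    · exact GF_le_DGam1 u t x 9
  have hxa : ∀ a, |x a| ≤ 2 * t := fun a => (coord_le_norm x a).trans (by linarith)
  rcases le_or_gt (jb (t - ‖x‖)) 10 with hJ10 | hJ10
  · -- easy region : ⟨t-r⟩ ≤ 10, use trivial bound
    have hcomp : |pd4 α (pd4 β u) t x| ≤ DGam1 u t x := by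
      fin_cases β <;> fin_cases α <;>
        first
          | exact (abs_ptE_le _ t x).trans (GF_le_DGam1 u t x 0)
          | exact (abs_pxE_le _ _ t x).trans (GF_le_DGam1 u t x 0)
          | exact (abs_ptE_le _ t x).trans (GF_le_DGam1 u t x 1)
          | exact (abs_pxE_le _ _ t x).trans (GF_le_DGam1 u t x 1)
          | exact (abs_ptE_le _ t x).trans (GF_le_DGam1 u t x 2)
          | exact (abs_pxE_le _ _ t x).trans (GF_le_DGam1 u t x 2)
          | exact (abs_ptE_le _ t x).trans (GF_le_DGam1 u t x 3)
          | exact (abs_pxE_le _ _ t x).trans (GF_le_DGam1 u t x 3)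
    have hJinv : (10:ℝ)⁻¹ ≤ (jb (t - ‖x‖))⁻¹ := by
      apply inv_anti₀ hJ0 hJ10
    have h1 : 0 ≤ (t / jb (t - ‖x‖)) * |G t x| := by positivity
    have h2 : (10:ℝ)⁻¹ * DGam1 u t x ≤ (jb (t - ‖x‖))⁻¹ * DGam1 u t x :=
      mul_le_mul_of_nonneg_right hJinv hD
    calc |pd4 α (pd4 β u) t x| ≤ DGam1 u t x := hcomp
      _ ≤ 200 * ((t / jb (t - ‖x‖)) * |G t x| + (jb (t - ‖x‖))⁻¹ * DGam1 u t x) := by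
          linarith
  · -- main region : ⟨t-r⟩ > 10
    have h99 : 99 ≤ (t - ‖x‖) ^ 2 := by nlinarith [hJsq, hJ0.le]
    have ht9 : 9 ≤ t := by
      rcases le_total ‖x‖ t with h | h
      · nlinarith [h99, hr0]
      · nlinarith [h99, hrt]
    have hJle : jb (t - ‖x‖) ≤ 2 * t := by
      nlinarith [hJsq, hJ0.le, hr0, hrt, ht9]
    have hJabs : jb (t - ‖x‖) ≤ 2 * |t - ‖x‖| := by
      nlinarith [hJsq, h99, abs_nonneg (t - ‖x‖), sq_abs (t - ‖x‖), hJ0.le]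
    have hden : t * jb (t - ‖x‖) ≤ 2 * |t ^ 2 - ‖x‖ ^ 2| := by
      have habs2 : |t ^ 2 - ‖x‖ ^ 2| = |t - ‖x‖| * (t + ‖x‖) := by
        rw [← abs_of_nonneg (show (0:ℝ) ≤ t + ‖x‖ by linarith), ← abs_mul]
        ring_nf
      rw [habs2]
      nlinarith [mul_le_mul_of_nonneg_left hJabs ht0,
        mul_nonneg (abs_nonneg (t - ‖x‖)) hr0]
    -- the Klainerman–Sideris identity
    have hid : (t ^ 2 - ‖x‖ ^ 2) * Dw e0 (Dw e0 f) (t, x)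
        = t ^ 2 * G t x
          + (t * pxE 0 (boostE 0 u) t x - x 0 * ptE (boostE 0 u) t x
              + x 0 * Dw (ee 0) f (t, x))
          + (t * pxE 1 (boostE 1 u) t x - x 1 * ptE (boostE 1 u) t x
              + x 1 * Dw (ee 1) f (t, x))
          + (t * pxE 2 (boostE 2 u) t x - x 2 * ptE (boostE 2 u) t x
              + x 2 * Dw (ee 2) f (t, x))
          - 3 * t * Dw e0 f (t, x) := by
      rw [hX 0 0, hX 1 1, hX 2 2, hY 0, hY 1, hY 2, hwave, sq_norm x]
      simp only [reduceIte]
      ring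
    have hAb : jb (t - ‖x‖) * |Dw e0 (Dw e0 f) (t, x)|
        ≤ 2 * t * |G t x| + 36 * DGam1 u t x :=
      boundA ht9 hJ0 hD hg hid (le_refl _) (hXb 0 0) (hXb 1 1) (hXb 2 2)
        (hYb 0) (hYb 1) (hYb 2) (hPa 0) (hPa 1) (hPa 2) hP0 (hxa 0) (hxa 1) (hxa 2) hden
    have hNid : ∀ a : Fin 3, t * Dw (ee a) (Dw e0 f) (t, x)
        = ptE (boostE a u) t x - Dw (ee a) f (t, x)
          - x a * Dw e0 (Dw e0 f) (t, x) := by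
      intro a; rw [hY a]; ring
    have hNb : ∀ a : Fin 3, jb (t - ‖x‖) * |Dw (ee a) (Dw e0 f) (t, x)|
        ≤ 4 * t * |G t x| + 76 * DGam1 u t x :=
      fun a => boundN ht9 hJ0 hJle hD hg (hNid a) (hYb a) (hPa a) (hxa a) hAb
    have hIte : ∀ a b : Fin 3, |if a = b then Dw e0 f (t, x) else 0| ≤ DGam1 u t x := by
      intro a b; split_ifs
      · exact hP0
      · simpa using hD
    have hMid : ∀ b a : Fin 3, t * Dw (ee b) (Dw (ee a) f) (t, x)
        = pxE b (boostE a u) t x - x a * Dw (ee b) (Dw e0 f) (t, x)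
          - (if a = b then Dw e0 f (t, x) else 0) := by
      intro b a; rw [hX b a]; ring
    have hMb : ∀ b a : Fin 3, jb (t - ‖x‖) * |Dw (ee b) (Dw (ee a) f) (t, x)|
        ≤ 8 * t * |G t x| + 156 * DGam1 u t x :=
      fun b a => boundM ht9 hJ0 hJle hD hg (hMid b a) (hXb b a) (hIte a b) (hxa a) (hNb b)
    have htg : 0 ≤ t * |G t x| := mul_nonneg ht0 hg
    have hA200 : jb (t - ‖x‖) * |Dw e0 (Dw e0 f) (t, x)|
        ≤ 200 * (t * |G t x|) + 200 * DGam1 u t x := by linarith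
    have hN200 : ∀ a : Fin 3, jb (t - ‖x‖) * |Dw (ee a) (Dw e0 f) (t, x)|
        ≤ 200 * (t * |G t x|) + 200 * DGam1 u t x := fun a => by linarith [hNb a]
    have hM200 : ∀ b a : Fin 3, jb (t - ‖x‖) * |Dw (ee b) (Dw (ee a) f) (t, x)|
        ≤ 200 * (t * |G t x|) + 200 * DGam1 u t x := fun b a => by linarith [hMb b a]
    fin_cases α <;> fin_cases β
    · show |ptE (ptE u) t x| ≤ _
      rw [h00]; exact finalize hJ0 hA200
    · show |ptE (pxE 0 u) t x| ≤ _
      rw [hi0 0]; exact finalize hJ0 (hN200 0)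
    · show |ptE (pxE 1 u) t x| ≤ _
      rw [hi0 1]; exact finalize hJ0 (hN200 1)
    · show |ptE (pxE 2 u) t x| ≤ _
      rw [hi0 2]; exact finalize hJ0 (hN200 2)
    · show |pxE 0 (ptE u) t x| ≤ _
      rw [h0i 0]; exact finalize hJ0 (hN200 0)
    · show |pxE 0 (pxE 0 u) t x| ≤ _
      rw [hij 0 0]; exact finalize hJ0 (hM200 0 0)
    · show |pxE 0 (pxE 1 u) t x| ≤ _
      rw [hij 0 1]; exact finalize hJ0 (hM200 0 1)
    · show |pxE 0 (pxE 2 u) t x| ≤ _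
      rw [hij 0 2]; exact finalize hJ0 (hM200 0 2)
    · show |pxE 1 (ptE u) t x| ≤ _
      rw [h0i 1]; exact finalize hJ0 (hN200 1)
    · show |pxE 1 (pxE 0 u) t x| ≤ _
      rw [hij 1 0]; exact finalize hJ0 (hM200 1 0)
    · show |pxE 1 (pxE 1 u) t x| ≤ _
      rw [hij 1 1]; exact finalize hJ0 (hM200 1 1)
    · show |pxE 1 (pxE 2 u) t x| ≤ _
      rw [hij 1 2]; exact finalize hJ0 (hM200 1 2)
    · show |pxE 2 (ptE u) t x| ≤ _
      rw [h0i 2]; exact finalize hJ0 (hN200 2)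
    · show |pxE 2 (pxE 0 u) t x| ≤ _
      rw [hij 2 0]; exact finalize hJ0 (hM200 2 0)
    · show |pxE 2 (pxE 1 u) t x| ≤ _
      rw [hij 2 1]; exact finalize hJ0 (hM200 2 1)
    · show |pxE 2 (pxE 2 u) t x| ≤ _
      rw [hij 2 2]; exact finalize hJ0 (hM200 2 2)
end
end

section
/- Weighted pointwise estimate for Klein–Gordon: if u is smooth and satisfies −□u + u = G on ℝ^{1+3}, then pointwise |(⟨t+r⟩/⟨t−r⟩) u| ≤ C( Σ_{|J|≤1} |∂Γ^J u| + (⟨t+r⟩/⟨t−r⟩)|G| ) for a universal constant C. -/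
noncomputable section

open MeasureTheory Matrix

namespace Stmt11Helpers

variable {u : ℝ → Sp → ℝ}

theorem smth_slice_t (hu : Smth u) (x : Sp) : ContDiff ℝ (⊤ : ℕ∞) (fun s => u s x) :=
  hu.comp (contDiff_id.prodMk contDiff_const)

theorem smth_slice_x (hu : Smth u) (t : ℝ) : ContDiff ℝ (⊤ : ℕ∞) (fun y => u t y) :=
  hu.comp (contDiff_const.prodMk contDiff_id)

theorem hasDerivAt_slice (hu : Smth u) (t : ℝ) (x : Sp) :
    HasDerivAt (fun s => u s x) (ptE u t x) t :=
  (((smth_slice_t hu x).differentiable (by simp)) t).hasDerivAt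

theorem hasFDerivAt_slice (hu : Smth u) (t : ℝ) (x : Sp) :
    HasFDerivAt (fun y => u t y) (fderiv ℝ (fun y => u t y) x) x :=
  (((smth_slice_x hu t).differentiable (by simp)) x).hasFDerivAt

theorem fd_pt (hu : Smth u) (t : ℝ) (x : Sp) :
    ptE u t x = fderiv ℝ (fun p : ℝ × Sp => u p.1 p.2) (t, x) (1, 0) := by
  have hγ : HasDerivAt (fun s : ℝ => (s, x)) ((1 : ℝ), (0 : Sp)) t :=
    (hasDerivAt_id t).prodMk (hasDerivAt_const t x)
  have hU := ((hu.differentiable (by simp)) (t, x)).hasFDerivAt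
  exact (hU.comp_hasDerivAt t hγ).deriv

theorem fd_px (hu : Smth u) (a : Fin 3) (t : ℝ) (x : Sp) :
    pxE a u t x = fderiv ℝ (fun p : ℝ × Sp => u p.1 p.2) (t, x) (0, EuclideanSpace.single a 1) := by
  have hγ : HasFDerivAt (fun y : Sp => ((t, y) : ℝ × Sp)) (ContinuousLinearMap.inr ℝ ℝ Sp) x :=
    (hasFDerivAt_const t x).prodMk (hasFDerivAt_id x)
  have hU := ((hu.differentiable (by simp)) (t, x)).hasFDerivAt
  have h2 := (hU.comp x hγ).fderiv
  have hfun : (fun y : Sp => u t y) = ((fun p : ℝ × Sp => u p.1 p.2) ∘ (fun y : Sp => (t, y))) := rfl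
  rw [pxE, hfun, h2]; rfl

theorem smth_ptE (hu : Smth u) : Smth (ptE u) := by
  have h2 : ContDiff ℝ (⊤ : ℕ∞) (fun p : ℝ × Sp =>
      fderiv ℝ (fun q : ℝ × Sp => u q.1 q.2) p ((1 : ℝ), (0 : Sp))) :=
    (hu.fderiv_right (by simp)).clm_apply contDiff_const
  have heq : (fun p : ℝ × Sp => ptE u p.1 p.2)
      = fun p : ℝ × Sp => fderiv ℝ (fun q : ℝ × Sp => u q.1 q.2) p ((1 : ℝ), (0 : Sp)) :=
    funext fun p => fd_pt hu p.1 p.2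
  unfold Smth; rw [heq]; exact h2

theorem smth_pxE (hu : Smth u) (a : Fin 3) : Smth (pxE a u) := by
  have h2 : ContDiff ℝ (⊤ : ℕ∞) (fun p : ℝ × Sp =>
      fderiv ℝ (fun q : ℝ × Sp => u q.1 q.2) p ((0 : ℝ), EuclideanSpace.single a 1)) :=
    (hu.fderiv_right (by simp)).clm_apply contDiff_const
  have heq : (fun p : ℝ × Sp => pxE a u p.1 p.2)
      = fun p : ℝ × Sp => fderiv ℝ (fun q : ℝ × Sp => u q.1 q.2) p ((0 : ℝ), EuclideanSpace.single a 1) :=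
    funext fun p => fd_px hu a p.1 p.2
  unfold Smth; rw [heq]; exact h2

theorem symm2 (hu : Smth u) (a : Fin 3) (t : ℝ) (x : Sp) :
    ptE (pxE a u) t x = pxE a (ptE u) t x := by
  set U : ℝ × Sp → ℝ := fun p => u p.1 p.2 with hU
  have hdiff : ∀ y, HasFDerivAt U (fderiv ℝ U y) y := fun y =>
    ((hu.differentiable (by simp)) y).hasFDerivAt
  have hf'' : HasFDerivAt (fderiv ℝ U) (fderiv ℝ (fderiv ℝ U) (t, x)) (t, x) :=
    (((hu.fderiv_right (m := (⊤ : ℕ∞)) (by simp)).differentiable (by simp)) (t, x)).hasFDerivAt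
  have hsymm := second_derivative_symmetric hdiff hf''
    ((0 : ℝ), EuclideanSpace.single a 1) ((1 : ℝ), (0 : Sp))
  have e1 : ptE (pxE a u) t x
      = fderiv ℝ (fderiv ℝ U) (t, x) ((1 : ℝ), (0 : Sp)) ((0 : ℝ), EuclideanSpace.single a 1) := by
    rw [fd_pt (smth_pxE hu a) t x]
    have heq : (fun p : ℝ × Sp => pxE a u p.1 p.2)
        = fun p => fderiv ℝ U p ((0 : ℝ), EuclideanSpace.single a 1) :=
      funext fun p => fd_px hu a p.1 p.2
    rw [heq, fderiv_clm_apply (((hu.fderiv_right (m := (⊤ : ℕ∞)) (by simp)).differentiable (by simp)) (t, x))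
      (differentiableAt_const _)]
    simp
    rfl
  have e2 : pxE a (ptE u) t x
      = fderiv ℝ (fderiv ℝ U) (t, x) ((0 : ℝ), EuclideanSpace.single a 1) ((1 : ℝ), (0 : Sp)) := by
    rw [fd_px (smth_ptE hu) a t x]
    have heq : (fun p : ℝ × Sp => ptE u p.1 p.2)
        = fun p => fderiv ℝ U p ((1 : ℝ), (0 : Sp)) :=
      funext fun p => fd_pt hu p.1 p.2
    rw [heq, fderiv_clm_apply (((hu.fderiv_right (m := (⊤ : ℕ∞)) (by simp)).differentiable (by simp)) (t, x))
      (differentiableAt_const _)]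
    simp
    rfl
  rw [e1, e2, hsymm]

theorem ptE_boost (hu : Smth u) (a : Fin 3) (t : ℝ) (x : Sp) :
    ptE (boostE a u) t x
      = pxE a u t x + t * ptE (pxE a u) t x + x a * ptE (ptE u) t x := by
  have h1 := hasDerivAt_slice (smth_pxE hu a) t x
  have h2 := hasDerivAt_slice (smth_ptE hu) t x
  have h : HasDerivAt (fun s => boostE a u s x)
      (1 * pxE a u t x + t * ptE (pxE a u) t x + x a * ptE (ptE u) t x) t := by
    have := ((hasDerivAt_id' t).mul h1).add (h2.const_mul (x a))
    exact this
  rw [ptE, h.deriv]; ring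

theorem pxE_boost (hu : Smth u) (a : Fin 3) (t : ℝ) (x : Sp) :
    pxE a (boostE a u) t x
      = t * pxE a (pxE a u) t x + ptE u t x + x a * pxE a (ptE u) t x := by
  have g1 := hasFDerivAt_slice (smth_pxE hu a) t x
  have g2 := hasFDerivAt_slice (smth_ptE hu) t x
  have g3 : HasFDerivAt (fun y : Sp => y a) (EuclideanSpace.proj a : Sp →L[ℝ] ℝ) x :=
    (EuclideanSpace.proj a : Sp →L[ℝ] ℝ).hasFDerivAt
  have h : HasFDerivAt (fun y => boostE a u t y)
      (t • fderiv ℝ (fun y => pxE a u t y) x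
        + (x a • fderiv ℝ (fun y => ptE u t y) x
            + ptE u t x • (EuclideanSpace.proj a : Sp →L[ℝ] ℝ))) x := by
    have := (g1.const_mul t).add (g3.mul g2)
    have heq : (fun y => boostE a u t y) = fun y => t * pxE a u t y + y a * ptE u t y := by
      funext y; simp [boostE, smul_eq_mul]
    rw [heq]
    exact this
  rw [pxE, h.fderiv]
  simp [pxE, PiLp.proj_apply, EuclideanSpace.single_apply]
  ring

theorem key (hu : Smth u) (t : ℝ) (x : Sp) :
    t ^ 2 * (lapE u t x - ptE (ptE u) t x)
      = t * (∑ a : Fin 3, pxE a (boostE a u) t x)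
        - (∑ a : Fin 3, x a * ptE (boostE a u) t x)
        - 3 * t * ptE u t x + (∑ a : Fin 3, x a * pxE a u t x)
        + ((∑ a : Fin 3, (x a) ^ 2) - t ^ 2) * ptE (ptE u) t x := by
  have hA := fun a => ptE_boost hu a t x
  have hB := fun a => pxE_boost hu a t x
  have hS := fun a => symm2 hu a t x
  simp only [lapE, Fin.sum_univ_three]
  rw [hB 0, hB 1, hB 2, hA 0, hA 1, hA 2, hS 0, hS 1, hS 2]
  ring

theorem abs_ptE_le (v : ℝ → Sp → ℝ) (t : ℝ) (x : Sp) : |ptE v t x| ≤ DNormR v t x := by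
  rw [DNormR, ← Real.sqrt_sq_eq_abs]
  exact Real.sqrt_le_sqrt (le_add_of_nonneg_right (Finset.sum_nonneg fun i _ => sq_nonneg _))

theorem abs_pxE_le (i : Fin 3) (v : ℝ → Sp → ℝ) (t : ℝ) (x : Sp) :
    |pxE i v t x| ≤ DNormR v t x := by
  rw [DNormR, ← Real.sqrt_sq_eq_abs]
  refine Real.sqrt_le_sqrt ?_
  have h1 : pxE i v t x ^ 2 ≤ ∑ j : Fin 3, pxE j v t x ^ 2 :=
    Finset.single_le_sum (f := fun j => pxE j v t x ^ 2) (fun j _ => sq_nonneg _) (Finset.mem_univ i)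
  have h2 : (0 : ℝ) ≤ ptE v t x ^ 2 := sq_nonneg _
  linarith

theorem DN_le_DGam1 (u : ℝ → Sp → ℝ) (t : ℝ) (x : Sp) : DNormR u t x ≤ DGam1 u t x := by
  rw [DGam1]
  have h1 : (0 : ℝ) ≤ ∑ k : Fin 10, DNormR (GF k u) t x :=
    Finset.sum_nonneg fun k _ => Real.sqrt_nonneg _
  linarith

theorem DN_GF_le_DGam1 (u : ℝ → Sp → ℝ) (t : ℝ) (x : Sp) (k : Fin 10) :
    DNormR (GF k u) t x ≤ DGam1 u t x := by
  rw [DGam1]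
  have h1 : DNormR (GF k u) t x ≤ ∑ j : Fin 10, DNormR (GF j u) t x :=
    Finset.single_le_sum (f := fun j => DNormR (GF j u) t x)
      (fun j _ => Real.sqrt_nonneg _) (Finset.mem_univ k)
  have h2 : (0 : ℝ) ≤ DNormR u t x := Real.sqrt_nonneg _
  linarith

theorem jb_pos (s : ℝ) : 0 < jb s := Real.sqrt_pos.2 (by positivity)

theorem one_le_jb (s : ℝ) : 1 ≤ jb s := by
  rw [jb]
  have := Real.sqrt_le_sqrt (show (1 : ℝ) ≤ 1 + s ^ 2 by nlinarith [sq_nonneg s])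
  simpa using this

theorem abs_le_jb (s : ℝ) : |s| ≤ jb s := by
  rw [jb, ← Real.sqrt_sq_eq_abs]
  exact Real.sqrt_le_sqrt (by linarith)

theorem jb_le_three {a b : ℝ} (h : 1 + a ^ 2 ≤ 9 * (1 + b ^ 2)) : jb a ≤ 3 * jb b := by
  rw [jb, jb, show (3 : ℝ) * Real.sqrt (1 + b ^ 2) = Real.sqrt (9 * (1 + b ^ 2)) by
    rw [show (9 : ℝ) * (1 + b ^ 2) = 3 ^ 2 * (1 + b ^ 2) by ring,
      Real.sqrt_mul (by positivity), Real.sqrt_sq (by norm_num)]]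
  exact Real.sqrt_le_sqrt h

end Stmt11Helpers

set_option maxHeartbeats 2000000 in
/-- weighted pointwise Klein–Gordon estimate
`(⟨t+r⟩/⟨t-r⟩)|u| ≤ C (Σ_{|J|≤1} |∂Γ^J u| + (⟨t+r⟩/⟨t-r⟩)|G|)`. -/
theorem stmt_11 :
    ∃ C : ℝ, 0 < C ∧
      ∀ u G : ℝ → Sp → ℝ, Smth u → Smth G →
        (∀ t x, negBox u t x + u t x = G t x) →
        ∀ t (x : Sp),
          (jb (t + ‖x‖) / jb (t - ‖x‖)) * |u t x| ≤
            C * (DGam1 u t x + (jb (t + ‖x‖) / jb (t - ‖x‖)) * |G t x|) := by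
  classical
  open Stmt11Helpers in
  refine ⟨100, by norm_num, ?_⟩
  intro u G hu hG hEq t x
  set r := ‖x‖ with hr
  have hr0 : (0 : ℝ) ≤ r := norm_nonneg x
  have hjp := Stmt11Helpers.jb_pos
  have hj1 := Stmt11Helpers.one_le_jb
  have hja := Stmt11Helpers.abs_le_jb
  have hD : (0 : ℝ) ≤ DGam1 u t x :=
    le_trans (Real.sqrt_nonneg _) (Stmt11Helpers.DN_le_DGam1 u t x)
  suffices h : jb (t + r) * |u t x| ≤ 100 * (jb (t - r) * DGam1 u t x + jb (t + r) * |G t x|) by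
    rw [div_mul_eq_mul_div, div_le_iff₀ (hjp (t - r))]
    have hne : jb (t - r) ≠ 0 := (hjp _).ne'
    have heq : 100 * (DGam1 u t x + jb (t + r) / jb (t - r) * |G t x|) * jb (t - r)
        = 100 * (jb (t - r) * DGam1 u t x
            + (jb (t + r) / jb (t - r) * jb (t - r)) * |G t x|) := by ring
    rw [heq, div_mul_cancel₀ _ hne]
    exact h
  have hueq : u t x - G t x = lapE u t x - ptE (ptE u) t x := by
    have := hEq t x
    simp only [negBox] at this
    linarith
  -- atomic bounds against DGam1
  set D := DGam1 u t x with hDdef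
  have hpt : |ptE u t x| ≤ D :=
    (Stmt11Helpers.abs_ptE_le u t x).trans (Stmt11Helpers.DN_le_DGam1 u t x)
  have hpx0 : |pxE 0 u t x| ≤ D :=
    (Stmt11Helpers.abs_pxE_le 0 u t x).trans (Stmt11Helpers.DN_le_DGam1 u t x)
  have hpx1 : |pxE 1 u t x| ≤ D :=
    (Stmt11Helpers.abs_pxE_le 1 u t x).trans (Stmt11Helpers.DN_le_DGam1 u t x)
  have hpx2 : |pxE 2 u t x| ≤ D :=
    (Stmt11Helpers.abs_pxE_le 2 u t x).trans (Stmt11Helpers.DN_le_DGam1 u t x)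
  have hptt : |ptE (ptE u) t x| ≤ D :=
    (Stmt11Helpers.abs_ptE_le (ptE u) t x).trans (Stmt11Helpers.DN_GF_le_DGam1 u t x 0)
  have hQ0 : |ptE (boostE 0 u) t x| ≤ D :=
    (Stmt11Helpers.abs_ptE_le (boostE 0 u) t x).trans (Stmt11Helpers.DN_GF_le_DGam1 u t x 7)
  have hQ1 : |ptE (boostE 1 u) t x| ≤ D :=
    (Stmt11Helpers.abs_ptE_le (boostE 1 u) t x).trans (Stmt11Helpers.DN_GF_le_DGam1 u t x 8)
  have hQ2 : |ptE (boostE 2 u) t x| ≤ D :=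
    (Stmt11Helpers.abs_ptE_le (boostE 2 u) t x).trans (Stmt11Helpers.DN_GF_le_DGam1 u t x 9)
  have hP0 : |pxE 0 (boostE 0 u) t x| ≤ D :=
    (Stmt11Helpers.abs_pxE_le 0 (boostE 0 u) t x).trans (Stmt11Helpers.DN_GF_le_DGam1 u t x 7)
  have hP1 : |pxE 1 (boostE 1 u) t x| ≤ D :=
    (Stmt11Helpers.abs_pxE_le 1 (boostE 1 u) t x).trans (Stmt11Helpers.DN_GF_le_DGam1 u t x 8)
  have hP2 : |pxE 2 (boostE 2 u) t x| ≤ D :=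
    (Stmt11Helpers.abs_pxE_le 2 (boostE 2 u) t x).trans (Stmt11Helpers.DN_GF_le_DGam1 u t x 9)
  have hL0 : |pxE 0 (pxE 0 u) t x| ≤ D :=
    (Stmt11Helpers.abs_pxE_le 0 (pxE 0 u) t x).trans (Stmt11Helpers.DN_GF_le_DGam1 u t x 1)
  have hL1 : |pxE 1 (pxE 1 u) t x| ≤ D :=
    (Stmt11Helpers.abs_pxE_le 1 (pxE 1 u) t x).trans (Stmt11Helpers.DN_GF_le_DGam1 u t x 2)
  have hL2 : |pxE 2 (pxE 2 u) t x| ≤ D :=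
    (Stmt11Helpers.abs_pxE_le 2 (pxE 2 u) t x).trans (Stmt11Helpers.DN_GF_le_DGam1 u t x 3)
  have htri : |u t x| ≤ |u t x - G t x| + |G t x| := by
    have := abs_add_le (u t x - G t x) (G t x)
    simpa using this
  by_cases hcase : 1 ≤ t ∧ r ≤ 2 * t
  · obtain ⟨ht1, hrt⟩ := hcase
    have ht0 : (0 : ℝ) < t := lt_of_lt_of_le one_pos ht1
    -- norm facts
    have hsum : x 0 ^ 2 + x 1 ^ 2 + x 2 ^ 2 = r ^ 2 := by
      have h1 : r = Real.sqrt (∑ a : Fin 3, (x a) ^ 2) := by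
        rw [hr, EuclideanSpace.norm_eq]
        congr 1
        refine Finset.sum_congr rfl fun a _ => ?_
        rw [Real.norm_eq_abs, sq_abs]
      rw [h1, Real.sq_sqrt (Finset.sum_nonneg fun a _ => sq_nonneg _), Fin.sum_univ_three]
    have hx : ∀ a : Fin 3, |x a| ≤ r := by
      intro a
      have h1 : (x a) ^ 2 ≤ ∑ b : Fin 3, (x b) ^ 2 :=
        Finset.single_le_sum (f := fun b => (x b) ^ 2) (fun b _ => sq_nonneg _)
          (Finset.mem_univ a)
      rw [Fin.sum_univ_three, hsum] at h1
      calc |x a| = Real.sqrt ((x a) ^ 2) := (Real.sqrt_sq_eq_abs _).symm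
        _ ≤ Real.sqrt (r ^ 2) := Real.sqrt_le_sqrt h1
        _ = r := Real.sqrt_sq hr0
    have hjbtr : jb (t + r) ≤ 4 * t := by
      rw [jb, show (4 : ℝ) * t = Real.sqrt ((4 * t) ^ 2) by
        rw [Real.sqrt_sq (by positivity)]]
      exact Real.sqrt_le_sqrt (by nlinarith)
    have hmain : t ^ 2 * (u t x - G t x)
        = t * (pxE 0 (boostE 0 u) t x + pxE 1 (boostE 1 u) t x + pxE 2 (boostE 2 u) t x)
          - (x 0 * ptE (boostE 0 u) t x + x 1 * ptE (boostE 1 u) t x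
              + x 2 * ptE (boostE 2 u) t x)
          - 3 * t * ptE u t x
          + (x 0 * pxE 0 u t x + x 1 * pxE 1 u t x + x 2 * pxE 2 u t x)
          + (r ^ 2 - t ^ 2) * ptE (ptE u) t x := by
      have hk := Stmt11Helpers.key hu t x
      simp only [Fin.sum_univ_three] at hk
      rw [hueq, hk, hsum]
    have mulb : ∀ c v γ β : ℝ, |c| ≤ γ → |v| ≤ β → |c * v| ≤ γ * β := by
      intro c v γ β h1 h2
      rw [abs_mul]
      exact mul_le_mul h1 h2 (abs_nonneg _) (le_trans (abs_nonneg c) h1)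
    have habs_t : |t| ≤ t := le_of_eq (abs_of_pos ht0)
    have hxa2t : ∀ a : Fin 3, |x a| ≤ 2 * t := fun a => (hx a).trans hrt
    have hm1 := mulb t _ t D habs_t hP0
    have hm2 := mulb t _ t D habs_t hP1
    have hm3 := mulb t _ t D habs_t hP2
    have hm4 := mulb (x 0) _ (2 * t) D (hxa2t 0) hQ0
    have hm5 := mulb (x 1) _ (2 * t) D (hxa2t 1) hQ1
    have hm6 := mulb (x 2) _ (2 * t) D (hxa2t 2) hQ2
    have hm7 := mulb (3 * t) _ (3 * t) D (le_of_eq (abs_of_pos (by linarith))) hpt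
    have hm8 := mulb (x 0) _ (2 * t) D (hxa2t 0) hpx0
    have hm9 := mulb (x 1) _ (2 * t) D (hxa2t 1) hpx1
    have hm10 := mulb (x 2) _ (2 * t) D (hxa2t 2) hpx2
    have habsrt : |r ^ 2 - t ^ 2| ≤ 3 * t * |t - r| := by
      rw [abs_sub_comm, show t ^ 2 - r ^ 2 = (t - r) * (t + r) by ring, abs_mul,
        abs_of_nonneg (by linarith : (0 : ℝ) ≤ t + r)]
      nlinarith [abs_nonneg (t - r)]
    have hm11 := mulb (r ^ 2 - t ^ 2) _ (3 * t * |t - r|) D habsrt hptt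
    have habsE : |t ^ 2 * (u t x - G t x)| ≤ 18 * t * D + 3 * t * |t - r| * D := by
      rw [hmain]
      rw [abs_le]
      obtain ⟨a1, b1⟩ := abs_le.1 hm1
      obtain ⟨a2, b2⟩ := abs_le.1 hm2
      obtain ⟨a3, b3⟩ := abs_le.1 hm3
      obtain ⟨a4, b4⟩ := abs_le.1 hm4
      obtain ⟨a5, b5⟩ := abs_le.1 hm5
      obtain ⟨a6, b6⟩ := abs_le.1 hm6
      obtain ⟨a7, b7⟩ := abs_le.1 hm7
      obtain ⟨a8, b8⟩ := abs_le.1 hm8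
      obtain ⟨a9, b9⟩ := abs_le.1 hm9
      obtain ⟨a10, b10⟩ := abs_le.1 hm10
      obtain ⟨a11, b11⟩ := abs_le.1 hm11
      constructor <;>
        linarith only [a1, b1, a2, b2, a3, b3, a4, b4, a5, b5, a6, b6, a7, b7, a8, b8,
          a9, b9, a10, b10, a11, b11]
    have hE2 : t ^ 2 * |u t x - G t x| ≤ 18 * t * D + 3 * t * |t - r| * D := by
      have he : |t ^ 2 * (u t x - G t x)| = t ^ 2 * |u t x - G t x| := by
        rw [abs_mul, abs_of_pos (by positivity : (0 : ℝ) < t ^ 2)]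
      linarith only [habsE, he.symm.le, he.le]
    have h84 : jb (t + r) * |u t x - G t x| ≤ 84 * (jb (t - r) * D) := by
      have hjtr : |t - r| ≤ jb (t - r) := hja (t - r)
      have hjj := hj1 (t - r)
      have hjpp := (hjp (t + r)).le
      have k1 : jb (t + r) * (t ^ 2 * |u t x - G t x|)
          ≤ jb (t + r) * (18 * t * D + 3 * t * |t - r| * D) :=
        mul_le_mul_of_nonneg_left hE2 hjpp
      have k2 : jb (t + r) * (18 * t * D) ≤ (4 * t) * (18 * t * D) :=
        mul_le_mul_of_nonneg_right hjbtr (by positivity)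
      have k3 : jb (t + r) * (3 * t * |t - r| * D) ≤ (4 * t) * (3 * t * |t - r| * D) :=
        mul_le_mul_of_nonneg_right hjbtr (by positivity)
      have k4 : (12 * t ^ 2) * (|t - r| * D) ≤ (12 * t ^ 2) * (jb (t - r) * D) :=
        mul_le_mul_of_nonneg_left (mul_le_mul_of_nonneg_right hjtr hD) (by positivity)
      have k5 : (72 * t ^ 2) * D ≤ (72 * t ^ 2) * (jb (t - r) * D) :=
        mul_le_mul_of_nonneg_left (le_mul_of_one_le_left hD hjj) (by positivity)
      have key2 : t ^ 2 * (jb (t + r) * |u t x - G t x|)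
          ≤ t ^ 2 * (84 * (jb (t - r) * D)) := by nlinarith only [k1, k2, k3, k4, k5]
      have ht2 : (0 : ℝ) < t ^ 2 := by positivity
      exact le_of_mul_le_mul_left key2 ht2
    have hGt : jb (t + r) * |u t x| ≤ jb (t + r) * |u t x - G t x| + jb (t + r) * |G t x| := by
      have hh := mul_le_mul_of_nonneg_left htri (hjp (t + r)).le
      nlinarith only [hh]
    linarith only [h84, hGt, mul_nonneg (hjp (t + r)).le (abs_nonneg (G t x)),
      mul_nonneg (hjp (t - r)).le hD]
  · -- far region : jb (t+r) ≤ 3 jb (t-r)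
    have h3 : jb (t + r) ≤ 3 * jb (t - r) := by
      apply Stmt11Helpers.jb_le_three
      rcases not_and_or.1 hcase with h | h
      · push_neg at h
        nlinarith [mul_nonneg (by linarith : (0 : ℝ) ≤ 1 - t) hr0, sq_nonneg (t - r),
          sq_nonneg t, sq_nonneg (r - 2)]
      · push_neg at h
        have h2r : (0 : ℝ) ≤ 2 * r - t := by linarith
        nlinarith [mul_nonneg (by linarith : (0 : ℝ) ≤ r - 2 * t) h2r]
    have hug : |u t x - G t x| ≤ 4 * D := by
      rw [hueq]
      have hlap : lapE u t x = pxE 0 (pxE 0 u) t x + pxE 1 (pxE 1 u) t x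
          + pxE 2 (pxE 2 u) t x := by
        rw [lapE, Fin.sum_univ_three]
      rw [hlap, abs_le]
      obtain ⟨a1, b1⟩ := abs_le.1 hL0
      obtain ⟨a2, b2⟩ := abs_le.1 hL1
      obtain ⟨a3, b3⟩ := abs_le.1 hL2
      obtain ⟨a4, b4⟩ := abs_le.1 hptt
      constructor <;> linarith
    have h1 : jb (t + r) * |u t x| ≤ jb (t + r) * |G t x| + jb (t + r) * (4 * D) := by
      have hh := mul_le_mul_of_nonneg_left htri (hjp (t + r)).le
      have h2 := mul_le_mul_of_nonneg_left hug (hjp (t + r)).le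
      nlinarith only [hh, h2]
    have h2 : jb (t + r) * (4 * D) ≤ (3 * jb (t - r)) * (4 * D) :=
      mul_le_mul_of_nonneg_right h3 (by linarith)
    nlinarith only [mul_nonneg (hjp (t + r)).le (abs_nonneg (G t x)),
      mul_nonneg (hjp (t - r)).le hD, h1, h2]
end
end

section
/- Hidden null structure of the Dirac bilinear: for any two ℂ⁴-valued functions Φ₁, Φ₂ on ℝ^{1+3} \ {r=0}, one has Φ₁*γ⁰Φ₂ = (1/4)( [Φ₁]_−*γ⁰[Φ₂]_− + [Φ₁]_−*γ⁰[Φ₂]_+ + [Φ₁]_+*γ⁰[Φ₂]_− ), where [Φ]_± = Φ ± ω_aγ⁰γ^aΦ with ω_a = x_a/|x|. -/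
noncomputable section

open MeasureTheory Matrix

noncomputable def Mm (γ : Fin 4 → Matrix (Fin 4) (Fin 4) ℂ) (c : Fin 3 → ℝ) : Matrix (Fin 4) (Fin 4) ℂ :=
  ∑ a : Fin 3, ((c a : ℂ)) • (γ 0 * γ a.succ)

section Aux
variable (γ : Fin 4 → Matrix (Fin 4) (Fin 4) ℂ) (hcl : CliffordRel γ) (hadj : AdjRel γ)
  (c : Fin 3 → ℝ)

include hcl in
lemma g0sq : γ 0 * γ 0 = 1 := by
  have h := hcl 0 0
  norm_num [ηc] at h
  have h2 : (2:ℂ) • (γ 0 * γ 0) = (2:ℂ) • (1 : Matrix (Fin 4) (Fin 4) ℂ) := by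
    rw [two_smul, h]
  exact smul_right_injective _ (two_ne_zero) h2

include hcl in
lemma anti0a (a : Fin 3) : γ 0 * γ a.succ = -(γ a.succ * γ 0) := by
  have h := hcl 0 a.succ
  rw [if_neg (by exact (Fin.succ_ne_zero a).symm)] at h
  simp at h
  linear_combination (norm := abel) h

include hcl in
lemma anti0a' (a : Fin 3) : γ a.succ * γ 0 = -(γ 0 * γ a.succ) := by
  rw [anti0a γ hcl a, neg_neg]

include hcl in
lemma antiab (a b : Fin 3) (h : a ≠ b) : γ a.succ * γ b.succ = -(γ b.succ * γ a.succ) := by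
  have h2 := hcl a.succ b.succ
  rw [if_neg (by simpa using h)] at h2
  simp at h2
  linear_combination (norm := abel) h2

include hcl in
lemma gasq (a : Fin 3) : γ a.succ * γ a.succ = -1 := by
  have h := hcl a.succ a.succ
  rw [if_pos rfl] at h
  norm_num [ηc, Fin.succ_ne_zero a] at h
  have h2 : (2:ℂ) • (γ a.succ * γ a.succ) = (2:ℂ) • (-1 : Matrix (Fin 4) (Fin 4) ℂ) := by
    rw [two_smul]; rw [h]; module
  exact smul_right_injective _ (two_ne_zero) h2

include hcl hadj in
lemma MH : (Mm γ c)ᴴ = Mm γ c := by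
  unfold Mm
  rw [conjTranspose_sum]
  refine Finset.sum_congr rfl fun a _ => ?_
  rw [conjTranspose_smul, conjTranspose_mul, hadj, hadj]
  simp only [ηc, if_pos rfl, if_neg (Fin.succ_ne_zero a), neg_neg, one_smul, neg_smul,
    smul_mul_assoc, mul_smul_comm, mul_neg, neg_mul]
  rw [anti0a' γ hcl a]
  simp

include hcl in
lemma g0M : γ 0 * Mm γ c = ∑ a : Fin 3, ((c a : ℂ)) • γ a.succ := by
  unfold Mm
  rw [Finset.mul_sum]
  refine Finset.sum_congr rfl fun a _ => ?_
  rw [mul_smul_comm, ← mul_assoc, g0sq γ hcl, one_mul]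

include hcl in
lemma Mg0 : Mm γ c * γ 0 = -∑ a : Fin 3, ((c a : ℂ)) • γ a.succ := by
  unfold Mm
  rw [Finset.sum_mul, ← Finset.sum_neg_distrib]
  refine Finset.sum_congr rfl fun a _ => ?_
  rw [smul_mul_assoc, mul_assoc, anti0a' γ hcl a, mul_neg, ← mul_assoc, g0sq γ hcl, one_mul,
    smul_neg]

include hcl in
lemma hanti : γ 0 * Mm γ c = -(Mm γ c * γ 0) := by
  rw [g0M γ hcl, Mg0 γ hcl, neg_neg]

include hcl in
lemma Msq (hc : ∑ a : Fin 3, c a ^ 2 = 1) : Mm γ c * Mm γ c = 1 := by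
  have hAB : ∀ a b : Fin 3, (γ 0 * γ a.succ) * (γ 0 * γ b.succ) = -(γ a.succ * γ b.succ) := by
    intro a b
    calc (γ 0 * γ a.succ) * (γ 0 * γ b.succ) = γ 0 * ((γ a.succ * γ 0) * γ b.succ) := by
          noncomm_ring
      _ = γ 0 * ((-(γ 0 * γ a.succ)) * γ b.succ) := by rw [anti0a' γ hcl a]
      _ = -((γ 0 * γ 0) * (γ a.succ * γ b.succ)) := by noncomm_ring
      _ = -(γ a.succ * γ b.succ) := by rw [g0sq γ hcl, one_mul]
  unfold Mm
  rw [Finset.sum_mul_sum]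
  have key : ∀ a b : Fin 3, ((c a : ℂ)) • (γ 0 * γ a.succ) * (((c b : ℂ)) • (γ 0 * γ b.succ))
      = -(((c a : ℂ) * (c b : ℂ)) • (γ a.succ * γ b.succ)) := by
    intro a b
    rw [smul_mul_assoc, mul_smul_comm, hAB, smul_smul]
    simp
  simp only [key]
  have hcc : ((c 0 : ℂ))^2 + ((c 1 : ℂ))^2 + ((c 2 : ℂ))^2 = 1 := by
    rw [Fin.sum_univ_three] at hc
    have := congrArg (fun r : ℝ => (r : ℂ)) hc
    push_cast at this
    exact this
  rw [Fin.sum_univ_three]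
  rw [Fin.sum_univ_three, Fin.sum_univ_three, Fin.sum_univ_three]
  rw [gasq γ hcl, gasq γ hcl, gasq γ hcl]
  rw [antiab γ hcl 1 0 (by decide), antiab γ hcl 2 0 (by decide), antiab γ hcl 2 1 (by decide)]
  conv_rhs => rw [show (1 : Matrix (Fin 4) (Fin 4) ℂ) =
    (((c 0 : ℂ))^2 + ((c 1 : ℂ))^2 + ((c 2 : ℂ))^2) • 1 from by rw [hcc, one_smul]]
  match_scalars <;> ring
end Aux

section Aux2
variable (γ : Fin 4 → Matrix (Fin 4) (Fin 4) ℂ) (hcl : CliffordRel γ) (hadj : AdjRel γ)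
  (c : Fin 3 → ℝ)

include hcl hadj in
lemma keyMat (hc : ∑ a : Fin 3, c a ^ 2 = 1) :
    (1 - Mm γ c)ᴴ * γ 0 * (1 - Mm γ c) + (1 - Mm γ c)ᴴ * γ 0 * (1 + Mm γ c) +
      (1 + Mm γ c)ᴴ * γ 0 * (1 - Mm γ c) = (4 : ℂ) • γ 0 := by
  have h1 := hanti γ hcl c
  have h2 := Msq γ hcl c hc
  have h3 : Mm γ c * γ 0 * Mm γ c = -(γ 0) := by
    rw [mul_assoc, h1, mul_neg, ← mul_assoc, h2, one_mul]
  rw [conjTranspose_sub, conjTranspose_add, conjTranspose_one, MH γ hcl hadj c]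
  simp only [sub_mul, mul_sub, add_mul, mul_add, one_mul, mul_one]
  rw [h3]
  simp only [h1]
  module
end Aux2


lemma sum_mulVec13 {ι : Type} (s : Finset ι) (A : ι → Matrix (Fin 4) (Fin 4) ℂ)
    (v : Fin 4 → ℂ) : (∑ a ∈ s, A a).mulVec v = ∑ a ∈ s, (A a).mulVec v := by
  induction s using Finset.cons_induction with
  | empty => simp [Matrix.zero_mulVec]
  | cons a s ha ih => simp [Finset.sum_cons, Matrix.add_mulVec, ih]

lemma dform_mulVec13 (γ : Fin 4 → Matrix (Fin 4) (Fin 4) ℂ) (N K : Matrix (Fin 4) (Fin 4) ℂ)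
    (φ ψ : C4) :
    star (N.mulVec φ) ⬝ᵥ (γ 0).mulVec (K.mulVec ψ) = star φ ⬝ᵥ (Nᴴ * γ 0 * K).mulVec ψ := by
  rw [star_mulVec, mulVec_mulVec, dotProduct_mulVec, vecMul_vecMul, ← dotProduct_mulVec,
    mul_assoc]

theorem stmt_13' (γ : Fin 4 → Matrix (Fin 4) (Fin 4) ℂ)
    (hcl : CliffordRel γ) (hadj : AdjRel γ)
    (Φ₁ Φ₂ : ℝ → Sp → C4) :
    ∀ t (x : Sp), x ≠ 0 →
      dform γ (Φ₁ t x) (Φ₂ t x) =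
        (1 / 4 : ℂ) *
          (dform γ (projMinus γ x (Φ₁ t x)) (projMinus γ x (Φ₂ t x)) +
            dform γ (projMinus γ x (Φ₁ t x)) (projPlus γ x (Φ₂ t x)) +
            dform γ (projPlus γ x (Φ₁ t x)) (projMinus γ x (Φ₂ t x))) := by
  intro t x hx
  have hn : ‖x‖ ≠ 0 := norm_ne_zero_iff.mpr hx
  have hc : ∑ a : Fin 3, (omg x a) ^ 2 = 1 := by
    have hsum : ∑ a : Fin 3, (x a)^2 = ‖x‖^2 := by
      rw [EuclideanSpace.norm_eq, Real.sq_sqrt (by positivity)]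
      simp [Real.norm_eq_abs, sq_abs]
    simp only [omg, div_pow, ← Finset.sum_div, hsum]
    field_simp
  set φ := Φ₁ t x
  set ψ := Φ₂ t x
  have hpm : ∀ χ : C4, projMinus γ x χ = (1 - Mm γ (omg x)).mulVec χ := by
    intro χ
    unfold projMinus Mm
    rw [Matrix.sub_mulVec, Matrix.one_mulVec, sum_mulVec13]
    congr 1
    exact Finset.sum_congr rfl fun a _ => (smul_mulVec _ _ _).symm
  have hpp : ∀ χ : C4, projPlus γ x χ = (1 + Mm γ (omg x)).mulVec χ := by
    intro χ
    unfold projPlus Mm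
    rw [Matrix.add_mulVec, Matrix.one_mulVec, sum_mulVec13]
    congr 1
    exact Finset.sum_congr rfl fun a _ => (smul_mulVec _ _ _).symm
  unfold dform
  simp only [hpm, hpp]
  rw [dform_mulVec13, dform_mulVec13, dform_mulVec13]
  rw [← dotProduct_add, ← dotProduct_add, ← Matrix.add_mulVec, ← Matrix.add_mulVec]
  rw [keyMat γ hcl hadj (omg x) hc]
  rw [smul_mulVec, dotProduct_smul, smul_eq_mul]
  ring

/-- hidden null structure of the Dirac bilinear
`Φ₁*γ⁰Φ₂ = (1/4)([Φ₁]₋*γ⁰[Φ₂]₋ + [Φ₁]₋*γ⁰[Φ₂]₊ + [Φ₁]₊*γ⁰[Φ₂]₋)`. -/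
theorem stmt_13 (γ : Fin 4 → Matrix (Fin 4) (Fin 4) ℂ)
    (hcl : CliffordRel γ) (hadj : AdjRel γ)
    (Φ₁ Φ₂ : ℝ → Sp → C4) :
    ∀ t (x : Sp), x ≠ 0 →
      dform γ (Φ₁ t x) (Φ₂ t x) =
        (1 / 4 : ℂ) *
          (dform γ (projMinus γ x (Φ₁ t x)) (projMinus γ x (Φ₂ t x)) +
            dform γ (projMinus γ x (Φ₁ t x)) (projPlus γ x (Φ₂ t x)) +
            dform γ (projPlus γ x (Φ₁ t x)) (projMinus γ x (Φ₂ t x))) := by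
  exact stmt_13' γ hcl hadj Φ₁ Φ₂
end
end
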